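/- arXiv:0803.0800 — 6 statements merged into one kernel-verified Lean document; each statement's English description precedes it below -/
import Mathlib

section
/- Suppose r and q satisfy conditions (1.2) and additionally ∫_{-∞}^0 dt/r(t) = ∫_0^∞ dt/r(t) = ∞ (condition (1.4)). If for some p ∈ [1,∞) the equation -(r(x)y'(x))' + q(x)y(x) = f(x) is correctly solvable in L_p(ℝ), then: (i) ∫_{-∞}^x q(t)dt > 0 and ∫_x^∞ q(t)dt > 0 for every x ∈ ℝ (condition (1.5)); and (ii) for every x ∈ ℝ, (∫_{x-d}^x dt/r(t))·(∫_{x-d}^x q(t)dt) → ∞ as |d| → ∞, where for d < 0 the integrals are taken over [x, x-d] (condition (1.6)). -/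
open MeasureTheory Set Filter
open scoped ENNReal

noncomputable section

/-- Conditions (1.2): `r > 0`, `q ≥ 0`, `1/r ∈ L¹loc(ℝ)`, `q ∈ L¹loc(ℝ)`. -/
def Cond12 (r q : ℝ → ℝ) : Prop :=
  (∀ x : ℝ, 0 < r x) ∧ (∀ x : ℝ, 0 ≤ q x) ∧
    LocallyIntegrable (fun x : ℝ => (r x)⁻¹) volume ∧ LocallyIntegrable q volume

/-- Condition (1.4): `∫_{-∞}^0 dt/r(t) = ∫_0^∞ dt/r(t) = ∞`. -/
def Cond14 (r : ℝ → ℝ) : Prop :=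
  (∫⁻ t in Iic (0 : ℝ), ENNReal.ofReal (r t)⁻¹) = ⊤ ∧
  (∫⁻ t in Ici (0 : ℝ), ENNReal.ofReal (r t)⁻¹) = ⊤

/-- Condition (1.5): `∫_{-∞}^x q > 0` and `∫_x^∞ q > 0` for all `x`. -/
def Cond15 (q : ℝ → ℝ) : Prop :=
  ∀ x : ℝ, (0 < ∫⁻ t in Iic x, ENNReal.ofReal (q t)) ∧
           (0 < ∫⁻ t in Ici x, ENNReal.ofReal (q t))

/-- Condition (1.6): `(∫_{x-d}^x 1/r)·(∫_{x-d}^x q) → ∞` as `|d| → ∞` (for `d < 0` the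
integrals are taken over `[x, x-d]`; the set `uIoc (x-d) x` covers both orientations). -/
def Cond16 (r q : ℝ → ℝ) : Prop :=
  ∀ x : ℝ, Tendsto (fun d : ℝ =>
      (∫ t in uIoc (x - d) x, (r t)⁻¹) * ∫ t in uIoc (x - d) x, q t)
    (atTop ⊔ atBot) atTop

/-- `y` is a solution of `-(r y')' + q y = f` with (a.e.) derivative `y'`:
`y` and `r·y'` are (locally) absolutely continuous, expressed via the integral
characterization, and the equation holds. -/
def IsSolutionWith (r q f y y' : ℝ → ℝ) : Prop :=
  (∀ a b : ℝ, IntervalIntegrable y' volume a b) ∧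
  (∀ x : ℝ, y x = y 0 + ∫ t in (0:ℝ)..x, y' t) ∧
  (∀ a b : ℝ, IntervalIntegrable (fun t => q t * y t - f t) volume a b) ∧
  (∀ x : ℝ, r x * y' x = r 0 * y' 0 + ∫ t in (0:ℝ)..x, (q t * y t - f t))

/-- `y` is a solution of `-(r y')' + q y = f`. -/
def IsSolution (r q f y : ℝ → ℝ) : Prop := ∃ y' : ℝ → ℝ, IsSolutionWith r q f y y'

/-- `z` is a solution of the homogeneous equation `(r z')' = q z` with derivative `z'`. -/
def IsSolutionHom (r q z z' : ℝ → ℝ) : Prop := IsSolutionWith r q (fun _ => 0) z z'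

/-- Membership in `L_p(ℝ)`. -/
def MemLP (f : ℝ → ℝ) (p : ℝ) : Prop := MemLp f (ENNReal.ofReal p) volume

/-- The `L_p(ℝ)` norm. -/
def lpNorm (f : ℝ → ℝ) (p : ℝ) : ℝ≥0∞ := eLpNorm f (ENNReal.ofReal p) volume

/-- The equation `-(r y')' + q y = f` is correctly solvable in `L_p(ℝ)`: for every
`f ∈ L_p` there is a unique solution `y ∈ L_p`, and `‖y‖_p ≤ c(p)‖f‖_p` with an
absolute constant `c(p) > 0`. -/
def CorrectlySolvable (r q : ℝ → ℝ) (p : ℝ) : Prop :=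
  (∀ f : ℝ → ℝ, MemLP f p → ∃! y : ℝ → ℝ, IsSolution r q f y ∧ MemLP y p) ∧
  ∃ c : ℝ, 0 < c ∧ ∀ f y : ℝ → ℝ, MemLP f p → IsSolution r q f y → MemLP y p →
    lpNorm y p ≤ ENNReal.ofReal c * lpNorm f p

/-- `{u, v}` (with derivatives `u'`, `v'`) is the fundamental system of solutions of
`(r z')' = q z` with properties (1.8)-(1.11). -/
def IsFSS (r q u u' v v' : ℝ → ℝ) : Prop :=
  IsSolutionHom r q u u' ∧ IsSolutionHom r q v v' ∧
  (∀ x : ℝ, 0 < u x) ∧ (∀ x : ℝ, 0 < v x) ∧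
  (∀ x : ℝ, 0 ≤ v' x) ∧ (∀ x : ℝ, u' x ≤ 0) ∧
  (∀ x : ℝ, r x * (v' x * u x - u' x * v x) = 1) ∧
  Tendsto (fun x => v x / u x) atBot (nhds 0) ∧
  Tendsto (fun x => u x / v x) atTop (nhds 0) ∧
  (∫⁻ t in Iic (0 : ℝ), ENNReal.ofReal (r t * (v t) ^ 2)⁻¹) = ⊤ ∧
  (∫⁻ t in Ici (0 : ℝ), ENNReal.ofReal (r t * (u t) ^ 2)⁻¹) = ⊤ ∧
  (∫⁻ t in Ici (0 : ℝ), ENNReal.ofReal (r t * (v t) ^ 2)⁻¹) < ⊤ ∧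
  (∫⁻ t in Iic (0 : ℝ), ENNReal.ofReal (r t * (u t) ^ 2)⁻¹) < ⊤

/-- The Green function `G(x,t)` of (1.12). -/
def greenK (u v : ℝ → ℝ) (x t : ℝ) : ℝ := if t ≤ x then u x * v t else u t * v x

/-- `(G₁ f)(x) = u(x) ∫_{-∞}^x v f`. -/
def G1op (u v f : ℝ → ℝ) (x : ℝ) : ℝ := u x * ∫ t in Iic x, v t * f t

/-- `(G₂ f)(x) = v(x) ∫_x^∞ u f`. -/
def G2op (u v f : ℝ → ℝ) (x : ℝ) : ℝ := v x * ∫ t in Ici x, u t * f t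

/-- The Green integral operator `(G f)(x) = ∫_ℝ G(x,t) f(t) dt`. -/
def greenOp (u v f : ℝ → ℝ) (x : ℝ) : ℝ := G1op u v f x + G2op u v f x

/-- The operator norm of a map `T` acting on `L_p(ℝ)`: the least constant `C` such
that `‖T f‖_p ≤ C ‖f‖_p` for all `f ∈ L_p`. -/
def opNormLp (T : (ℝ → ℝ) → ℝ → ℝ) (p : ℝ) : ℝ≥0∞ :=
  sInf {C : ℝ≥0∞ | ∀ f : ℝ → ℝ, MemLP f p → lpNorm (T f) p ≤ C * lpNorm f p}

/-- The Green operator is bounded as an operator from `L_p(ℝ)` to `L_p(ℝ)`: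
it is well defined on `L_p` (the defining integrals converge), maps into `L_p`,
and its operator norm is finite. -/
def GreenBounded (u v : ℝ → ℝ) (p : ℝ) : Prop :=
  (∀ f : ℝ → ℝ, MemLP f p →
    (∀ x : ℝ, IntegrableOn (fun t => v t * f t) (Iic x) volume ∧
              IntegrableOn (fun t => u t * f t) (Ici x) volume) ∧
    MemLP (greenOp u v f) p) ∧
  opNormLp (greenOp u v) p < ⊤

/-- `F₁(x,d) = (∫_{x-d}^x dt/r)·(∫_{x-d}^x q dt)`. -/
def F1 (r q : ℝ → ℝ) (x d : ℝ) : ℝ :=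
  (∫ t in (x - d)..x, (r t)⁻¹) * ∫ t in (x - d)..x, q t

/-- `F₂(x,d) = (∫_x^{x+d} dt/r)·(∫_x^{x+d} q dt)`. -/
def F2 (r q : ℝ → ℝ) (x d : ℝ) : ℝ :=
  (∫ t in x..(x + d), (r t)⁻¹) * ∫ t in x..(x + d), q t

/-- `φ(x) = ∫_{x-d₁(x)}^x dt/r(t)`. -/
def phiF (r d1 : ℝ → ℝ) (x : ℝ) : ℝ := ∫ t in (x - d1 x)..x, (r t)⁻¹

/-- `ψ(x) = ∫_x^{x+d₂(x)} dt/r(t)`. -/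
def psiF (r d2 : ℝ → ℝ) (x : ℝ) : ℝ := ∫ t in x..(x + d2 x), (r t)⁻¹

/-- `h(x) = φ(x)ψ(x)/(φ(x)+ψ(x))`. -/
def hF (r d1 d2 : ℝ → ℝ) (x : ℝ) : ℝ :=
  phiF r d1 x * psiF r d2 x / (phiF r d1 x + psiF r d2 x)

/-- `d₁` solves the first equation of (1.15). -/
def IsD1 (r q d1 : ℝ → ℝ) : Prop := ∀ x : ℝ, 0 < d1 x ∧ F1 r q x (d1 x) = 1

/-- `d₂` solves the second equation of (1.15). -/
def IsD2 (r q d2 : ℝ → ℝ) : Prop := ∀ x : ℝ, 0 < d2 x ∧ F2 r q x (d2 x) = 1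

/-- `d` solves equation (1.18): `∫_{x-d(x)}^{x+d(x)} dt/(r(t)h(t)) = 1`. -/
def IsD (r h d : ℝ → ℝ) : Prop :=
  ∀ x : ℝ, 0 < d x ∧ (∫ t in (x - d x)..(x + d x), (r t * h t)⁻¹) = 1

/-- The Hardy-type operator `(𝒦 f)(t) = μ(t) ∫_t^∞ θ(ξ) f(ξ) dξ`. -/
def hardyOp (μ θ f : ℝ → ℝ) (t : ℝ) : ℝ := μ t * ∫ ξ in Ici t, θ ξ * f ξ

/-- `H_p = sup_x (∫_{-∞}^x μ^p)^{1/p} (∫_x^∞ θ^{p'})^{1/p'}` with `p' = p/(p-1)`. -/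
def HardyHp (μ θ : ℝ → ℝ) (p : ℝ) : ℝ≥0∞ :=
  ⨆ x : ℝ, (∫⁻ t in Iic x, ENNReal.ofReal (μ t ^ p)) ^ (1 / p) *
           (∫⁻ t in Ici x, ENNReal.ofReal (θ t ^ (p / (p - 1)))) ^ (1 - 1 / p)

/-!
If `q` vanished a.e. on a half-line, the equation would read `-(r y')' = f` there. Take
`r y' = g` piecewise linear, rising with unit slope from `0` to `1`, back to `0`, down to `-1`
and back to `0`. Then `f = -g'` is a combination of four unit pulses, and `y = ∫ g / r` rises
by some `H₁` and later falls by some `H₂`, where `H₁, H₂ ≥ ∫ 1/r` over the flat parts of `g`.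
Rescaling the two halves so that `y` has a plateau of height `1` makes `y` compactly supported,
with `‖f‖_p ≤ 2 (1/H₁ + 1/H₂)` and `‖y‖_p ≥ L^{1/p}` for a plateau of length `L`. Fixing the
riser nearest the point, (1.4) lets the far riser have height `≥ 1`, so `‖f‖_p` stays bounded
while `L → ∞`: this contradicts the a priori estimate and proves (1.5). For (1.6), as `|d| → ∞`
the first factor tends to `∞` by (1.4) and the second has a positive limit by (1.5).
-/

open scoped Topology

theorem MeasureTheory.LocallyIntegrable.intervalIntegrable {E : Type*} [NormedAddCommGroup E]
    {μ : Measure ℝ} [IsLocallyFiniteMeasure μ] {f : ℝ → E} (hf : LocallyIntegrable f μ)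
    (a b : ℝ) : IntervalIntegrable f μ a b :=
  (hf.integrableOn_isCompact isCompact_uIcc).intervalIntegrable

section Tails

variable {f : ℝ → ℝ}

theorem tendsto_ofReal_intervalIntegral_atBot (hf : ∀ t, 0 ≤ f t) (hloc : LocallyIntegrable f)
    (x : ℝ) :
    Tendsto (fun u => ENNReal.ofReal (∫ t in u..x, f t)) atBot
      (𝓝 (∫⁻ t in Iic x, ENNReal.ofReal (f t))) := by
  have h := tendsto_measure_Ioc_atBot (volume.withDensity fun t => ENNReal.ofReal (f t)) x
  simp only [withDensity_apply'] at h
  refine h.congr' ?_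
  filter_upwards [eventually_le_atBot x] with u hu
  rw [intervalIntegral.integral_of_le hu, ofReal_integral_eq_lintegral_ofReal
    ((hloc.integrableOn_isCompact isCompact_Icc).mono_set Ioc_subset_Icc_self)
    (ae_of_all _ hf)]

theorem tendsto_ofReal_intervalIntegral_atTop (hf : ∀ t, 0 ≤ f t) (hloc : LocallyIntegrable f)
    (x : ℝ) :
    Tendsto (fun v => ENNReal.ofReal (∫ t in x..v, f t)) atTop
      (𝓝 (∫⁻ t in Ici x, ENNReal.ofReal (f t))) := by
  have h := tendsto_measure_Ico_atTop (volume.withDensity fun t => ENNReal.ofReal (f t)) x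
  simp only [withDensity_apply'] at h
  refine h.congr' ?_
  filter_upwards [eventually_ge_atTop x] with v hv
  rw [intervalIntegral.integral_of_le hv, ← integral_Ico_eq_integral_Ioc,
    ofReal_integral_eq_lintegral_ofReal
    ((hloc.integrableOn_isCompact isCompact_Icc).mono_set Ico_subset_Icc_self)
    (ae_of_all _ hf)]

theorem tendsto_intervalIntegral_atBot (hf : ∀ t, 0 ≤ f t) (hloc : LocallyIntegrable f)
    (hdiv : ∫⁻ t in Iic 0, ENNReal.ofReal (f t) = ⊤) (x : ℝ) :
    Tendsto (fun u => ∫ t in u..x, f t) atBot atTop := by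
  have h0 : Tendsto (fun u => ∫ t in u..0, f t) atBot atTop :=
    ENNReal.tendsto_ofReal_nhds_top.1 (hdiv ▸ tendsto_ofReal_intervalIntegral_atBot hf hloc 0)
  refine (tendsto_atTop_add_const_right _ (∫ t in (0 : ℝ)..x, f t) h0).congr fun u => ?_
  exact intervalIntegral.integral_add_adjacent_intervals
    (hloc.intervalIntegrable _ _) (hloc.intervalIntegrable _ _)

theorem tendsto_intervalIntegral_atTop (hf : ∀ t, 0 ≤ f t) (hloc : LocallyIntegrable f)
    (hdiv : ∫⁻ t in Ici 0, ENNReal.ofReal (f t) = ⊤) (x : ℝ) :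
    Tendsto (fun v => ∫ t in x..v, f t) atTop atTop := by
  have h0 : Tendsto (fun v => ∫ t in (0 : ℝ)..v, f t) atTop atTop :=
    ENNReal.tendsto_ofReal_nhds_top.1 (hdiv ▸ tendsto_ofReal_intervalIntegral_atTop hf hloc 0)
  refine (tendsto_atTop_add_const_left _ (∫ t in x..0, f t) h0).congr fun v => ?_
  exact intervalIntegral.integral_add_adjacent_intervals
    (hloc.intervalIntegrable _ _) (hloc.intervalIntegrable _ _)

end Tails

def pulse (u : ℝ) : ℝ → ℝ := (Ioc u (u + 1)).indicator 1

def ramp (u x : ℝ) : ℝ := max 0 (min 1 (x - u))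

section Ramp

variable {u v x : ℝ}

theorem ramp_of_le (h : x ≤ u) : ramp u x = 0 := by
  simp only [ramp]; exact max_eq_left (min_le_of_right_le (by linarith))

theorem ramp_of_ge (h : u + 1 ≤ x) : ramp u x = 1 := by
  simp only [ramp]; rw [min_eq_left (by linarith), max_eq_right zero_le_one]

theorem ramp_le_ramp (h : u ≤ v) (x : ℝ) : ramp v x ≤ ramp u x :=
  max_le_max le_rfl (min_le_min le_rfl (by linarith))

theorem continuous_ramp (u : ℝ) : Continuous (ramp u) := by
  unfold ramp; fun_prop

theorem integral_pulse_eq_ramp (u x : ℝ) : ∫ t in u..x, pulse u t = ramp u x := by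
  rcases le_total u x with hx | hx
  · rw [pulse, intervalIntegral.integral_of_le hx, integral_indicator_one measurableSet_Ioc,
      measureReal_restrict_apply measurableSet_Ioc, Ioc_inter_Ioc, Real.volume_real_Ioc, ramp,
      max_comm, max_self, ← min_sub_sub_right, add_sub_cancel_left]
  · rw [pulse, intervalIntegral.integral_of_ge hx, integral_indicator_one measurableSet_Ioc,
      measureReal_restrict_apply measurableSet_Ioc, Ioc_inter_Ioc, Real.volume_real_Ioc]
    simp [ramp_of_le hx, hx]

theorem intervalIntegrable_pulse (u a b : ℝ) :
    IntervalIntegrable (pulse u) volume a b :=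
  (integrableOn_const (C := (1 : ℝ)) measure_Ioc_lt_top.ne).integrable_indicator measurableSet_Ioc
    |>.intervalIntegrable

theorem integral_pulse (u a b : ℝ) :
    ∫ t in a..b, pulse u t = ramp u b - ramp u a := by
  rw [← intervalIntegral.integral_interval_sub_left (intervalIntegrable_pulse u u b)
    (intervalIntegrable_pulse u u a), integral_pulse_eq_ramp, integral_pulse_eq_ramp]

end Ramp

def riser (r : ℝ → ℝ) (u v x : ℝ) : ℝ := ∫ t in u..x, (ramp u t - ramp v t) * (r t)⁻¹

def riserHeight (r : ℝ → ℝ) (u v : ℝ) : ℝ := riser r u v (v + 1)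

section Riser

variable {r : ℝ → ℝ} {u v x : ℝ}

theorem intervalIntegrable_riser_deriv (hrl : LocallyIntegrable fun x => (r x)⁻¹) (u v a b : ℝ) :
    IntervalIntegrable (fun t => (ramp u t - ramp v t) * (r t)⁻¹) volume a b :=
  (hrl.intervalIntegrable a b).continuousOn_mul
    ((continuous_ramp u).sub (continuous_ramp v)).continuousOn

theorem riser_eq_add (hrl : LocallyIntegrable fun x => (r x)⁻¹) (u v a x : ℝ) :
    riser r u v x = riser r u v a + ∫ t in a..x, (ramp u t - ramp v t) * (r t)⁻¹ :=
  (intervalIntegral.integral_add_adjacent_intervals (intervalIntegrable_riser_deriv hrl ..)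
    (intervalIntegrable_riser_deriv hrl ..)).symm

theorem continuous_riser (hrl : LocallyIntegrable fun x => (r x)⁻¹) (u v : ℝ) :
    Continuous (riser r u v) :=
  intervalIntegral.continuous_primitive (intervalIntegrable_riser_deriv hrl u v) u

theorem riser_of_le (huv : u ≤ v) (hx : x ≤ u) : riser r u v x = 0 := by
  rw [riser, intervalIntegral.integral_congr (g := fun _ => 0), intervalIntegral.integral_zero]
  intro t ht
  rw [uIcc_of_ge hx] at ht
  simp [ramp_of_le ht.2, ramp_of_le (ht.2.trans huv)]

theorem riser_of_ge (hrl : LocallyIntegrable fun x => (r x)⁻¹) (huv : u ≤ v) (hx : v + 1 ≤ x) :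
    riser r u v x = riserHeight r u v := by
  rw [riser_eq_add hrl u v (v + 1) x, riserHeight,
    intervalIntegral.integral_congr (g := fun _ => 0), intervalIntegral.integral_zero, add_zero]
  intro t ht
  rw [uIcc_of_le hx] at ht
  simp [ramp_of_ge ht.1, ramp_of_ge (le_trans (by linarith) ht.1 : u + 1 ≤ t)]

theorem integral_inv_le_riserHeight (hr : ∀ x, 0 < r x)
    (hrl : LocallyIntegrable fun x => (r x)⁻¹) (huv : u + 1 ≤ v) :
    ∫ t in (u + 1)..v, (r t)⁻¹ ≤ riserHeight r u v := by
  have hnonneg : ∀ a b, a ≤ b → 0 ≤ ∫ t in a..b, (ramp u t - ramp v t) * (r t)⁻¹ :=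
    fun a b hab => intervalIntegral.integral_nonneg hab fun t _ =>
      mul_nonneg (sub_nonneg.2 (ramp_le_ramp (by linarith) t)) (inv_pos.2 (hr t)).le
  have hmid : ∫ t in (u + 1)..v, (ramp u t - ramp v t) * (r t)⁻¹ = ∫ t in (u + 1)..v, (r t)⁻¹ := by
    refine intervalIntegral.integral_congr fun t ht => ?_
    rw [uIcc_of_le huv] at ht
    simp [ramp_of_ge ht.1, ramp_of_le ht.2]
  rw [riserHeight, riser_eq_add hrl u v v, riser_eq_add hrl u v (u + 1) v, hmid, riser]
  linarith [hnonneg u (u + 1) (by linarith), hnonneg v (v + 1) (by linarith)]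

theorem riserHeight_pos (hr : ∀ x, 0 < r x) (hrl : LocallyIntegrable fun x => (r x)⁻¹)
    (huv : u + 1 < v) : 0 < riserHeight r u v :=
  (intervalIntegral.intervalIntegral_pos_of_pos_on (hrl.intervalIntegrable _ _)
    (fun t _ => inv_pos.2 (hr t)) huv).trans_le (integral_inv_le_riserHeight hr hrl huv.le)

theorem tendsto_riserHeight_atBot (hr : ∀ x, 0 < r x) (hrl : LocallyIntegrable fun x => (r x)⁻¹)
    (hdiv : ∫⁻ t in Iic 0, ENNReal.ofReal (r t)⁻¹ = ⊤) (v : ℝ) :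
    Tendsto (fun u => riserHeight r u v) atBot atTop := by
  refine tendsto_atTop_mono' _ ?_ ((tendsto_intervalIntegral_atBot (fun t => (inv_pos.2 (hr t)).le)
    hrl hdiv v).comp (tendsto_atBot_add_const_right _ 1 tendsto_id))
  filter_upwards [eventually_le_atBot (v - 1)] with u hu
  exact integral_inv_le_riserHeight hr hrl (by linarith : u + 1 ≤ v)

theorem tendsto_riserHeight_atTop (hr : ∀ x, 0 < r x) (hrl : LocallyIntegrable fun x => (r x)⁻¹)
    (hdiv : ∫⁻ t in Ici 0, ENNReal.ofReal (r t)⁻¹ = ⊤) (u : ℝ) :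
    Tendsto (fun v => riserHeight r u v) atTop atTop := by
  refine tendsto_atTop_mono' _ ?_
    (tendsto_intervalIntegral_atTop (fun t => (inv_pos.2 (hr t)).le) hrl hdiv (u + 1))
  filter_upwards [eventually_ge_atTop (u + 1)] with v hv
  exact integral_inv_le_riserHeight hr hrl hv

theorem isSolutionWith_riser (hr : ∀ x, 0 < r x) (hrl : LocallyIntegrable fun x => (r x)⁻¹)
    (u v : ℝ) :
    IsSolutionWith r (fun _ => 0) (pulse v - pulse u)
      (riser r u v) (fun t => (ramp u t - ramp v t) * (r t)⁻¹) := by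
  have hrhs : (fun t => 0 * riser r u v t - (pulse v - pulse u) t)
      = fun t => pulse u t - pulse v t := by
    funext t; simp
  refine ⟨intervalIntegrable_riser_deriv hrl u v, fun x => riser_eq_add hrl u v 0 x,
    fun a b => ?_, fun x => ?_⟩
  · rw [hrhs]
    exact (intervalIntegrable_pulse u a b).sub (intervalIntegrable_pulse v a b)
  · rw [hrhs, intervalIntegral.integral_sub (intervalIntegrable_pulse u 0 x)
      (intervalIntegrable_pulse v 0 x), integral_pulse, integral_pulse]
    field_simp [(hr x).ne', (hr 0).ne']
    ring

end Riser

namespace IsSolutionWith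

variable {r q q' f g y z y' z' : ℝ → ℝ}

theorem const_smul (h : IsSolutionWith r q f y y') (k : ℝ) :
    IsSolutionWith r q (k • f) (k • y) (k • y') := by
  obtain ⟨h₁, h₂, h₃, h₄⟩ := h
  have hrhs : (fun t => q t * (k • y) t - (k • f) t) = fun t => k * (q t * y t - f t) := by
    funext t; simp only [Pi.smul_apply, smul_eq_mul]; ring
  refine ⟨fun a b => (h₁ a b).const_mul k, fun x => ?_, fun a b => ?_, fun x => ?_⟩
  · simp only [Pi.smul_apply, smul_eq_mul, intervalIntegral.integral_const_mul, h₂ x]; ring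
  · rw [hrhs]; exact (h₃ a b).const_mul k
  · rw [hrhs, intervalIntegral.integral_const_mul]
    simp only [Pi.smul_apply, smul_eq_mul]
    linear_combination k * h₄ x

theorem sub (h : IsSolutionWith r q f y y') (h' : IsSolutionWith r q g z z') :
    IsSolutionWith r q (f - g) (y - z) (y' - z') := by
  obtain ⟨h₁, h₂, h₃, h₄⟩ := h
  obtain ⟨h₁', h₂', h₃', h₄'⟩ := h'
  have hrhs : (fun t => q t * (y - z) t - (f - g) t)
      = fun t => (q t * y t - f t) - (q t * z t - g t) := by
    funext t; simp only [Pi.sub_apply]; ring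
  refine ⟨fun a b => (h₁ a b).sub (h₁' a b), fun x => ?_, fun a b => ?_, fun x => ?_⟩
  · simp only [Pi.sub_apply]
    rw [intervalIntegral.integral_sub (h₁ 0 x) (h₁' 0 x), h₂ x, h₂' x]; ring
  · rw [hrhs]; exact (h₃ a b).sub (h₃' a b)
  · rw [hrhs, intervalIntegral.integral_sub (h₃ 0 x) (h₃' 0 x)]
    simp only [Pi.sub_apply]
    linear_combination h₄ x - h₄' x

theorem congr_potential (h : IsSolutionWith r q f y y') (hq : ∀ᵐ t, q t * y t = q' t * y t) :
    IsSolutionWith r q' f y y' := by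
  obtain ⟨h₁, h₂, h₃, h₄⟩ := h
  have hrhs : (fun t => q t * y t - f t) =ᵐ[volume] fun t => q' t * y t - f t :=
    hq.mono fun t ht => by simp only [ht]
  refine ⟨h₁, h₂, fun a b => (h₃ a b).congr_ae (ae_restrict_of_ae hrhs), fun x => ?_⟩
  rw [h₄ x, intervalIntegral.integral_congr_ae (hrhs.mono fun t ht _ => ht)]

end IsSolutionWith

theorem eLpNorm_pulse_le (u : ℝ) (p : ℝ≥0∞) : eLpNorm (pulse u) p volume ≤ 1 :=
  (eLpNorm_indicator_const_le (1 : ℝ) p).trans (by simp [Real.volume_Ioc])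

def plateau (r : ℝ → ℝ) (a b c e : ℝ) : ℝ → ℝ :=
  (riserHeight r a b)⁻¹ • riser r a b - (riserHeight r c e)⁻¹ • riser r c e

def plateauForce (r : ℝ → ℝ) (a b c e : ℝ) : ℝ → ℝ :=
  (riserHeight r a b)⁻¹ • (pulse b - pulse a) - (riserHeight r c e)⁻¹ • (pulse e - pulse c)

section Plateau

variable {r q : ℝ → ℝ} {a b c e p : ℝ}

theorem plateau_eq_zero (hrl : LocallyIntegrable fun x => (r x)⁻¹) (hab : a ≤ b) (hbc : b ≤ c)
    (hce : c ≤ e) (hH₁ : 0 < riserHeight r a b) (hH₂ : 0 < riserHeight r c e) {x : ℝ}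
    (hx : x ∉ Icc a (e + 1)) : plateau r a b c e x = 0 := by
  rcases le_or_gt x a with hxa | hxa
  · simp [plateau, riser_of_le hab hxa, riser_of_le hce (by linarith : x ≤ c)]
  · have hxe : e + 1 ≤ x := by by_contra! h; exact hx ⟨hxa.le, h.le⟩
    simp [plateau, riser_of_ge hrl hab (by linarith : b + 1 ≤ x), riser_of_ge hrl hce hxe,
      hH₁.ne', hH₂.ne']

theorem plateau_eq_one (hrl : LocallyIntegrable fun x => (r x)⁻¹) (hab : a ≤ b) (hce : c ≤ e)
    (hH₁ : 0 < riserHeight r a b) {x : ℝ} (hx : x ∈ Icc (b + 1) c) : plateau r a b c e x = 1 := by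
  simp [plateau, riser_of_ge hrl hab hx.1, riser_of_le hce hx.2, hH₁.ne']

theorem isSolution_plateau (hr : ∀ x, 0 < r x) (hrl : LocallyIntegrable fun x => (r x)⁻¹)
    (hab : a ≤ b) (hbc : b ≤ c) (hce : c ≤ e) (hH₁ : 0 < riserHeight r a b)
    (hH₂ : 0 < riserHeight r c e) (hq : ∀ᵐ t ∂volume.restrict (Icc a (e + 1)), q t = 0) :
    IsSolution r q (plateauForce r a b c e) (plateau r a b c e) := by
  refine ⟨_, (((isSolutionWith_riser hr hrl a b).const_smul _).sub
    ((isSolutionWith_riser hr hrl c e).const_smul _)).congr_potential ?_⟩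
  filter_upwards [(ae_restrict_iff' measurableSet_Icc).1 hq] with t ht
  by_cases hmem : t ∈ Icc a (e + 1)
  · simp [ht hmem]
  · have hy := plateau_eq_zero hrl hab hbc hce hH₁ hH₂ hmem
    simp only [plateau, Pi.sub_apply, Pi.smul_apply, smul_eq_mul] at hy
    simp [hy]

theorem memLP_plateau (hrl : LocallyIntegrable fun x => (r x)⁻¹) (hab : a ≤ b) (hbc : b ≤ c)
    (hce : c ≤ e) (hH₁ : 0 < riserHeight r a b) (hH₂ : 0 < riserHeight r c e) (p : ℝ) :
    MemLP (plateau r a b c e) p :=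
  (((continuous_riser hrl a b).const_smul _).sub ((continuous_riser hrl c e).const_smul _))
    |>.memLp_of_hasCompactSupport
    (HasCompactSupport.intro isCompact_Icc fun _ hx => plateau_eq_zero hrl hab hbc hce hH₁ hH₂ hx)

theorem rpow_le_lpNorm_plateau (hrl : LocallyIntegrable fun x => (r x)⁻¹) (hab : a ≤ b)
    (hbc : b + 1 ≤ c) (hce : c ≤ e) (hH₁ : 0 < riserHeight r a b) (hp : 0 < p) :
    ENNReal.ofReal ((c - (b + 1)) ^ (1 / p)) ≤ lpNorm (plateau r a b c e) p := by
  have hind : ∀ x, ‖(Ioc (b + 1) c).indicator (fun _ => (1 : ℝ)) x‖ ≤ ‖plateau r a b c e x‖ := by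
    intro x
    by_cases hx : x ∈ Ioc (b + 1) c
    · rw [indicator_of_mem hx, plateau_eq_one hrl hab hce hH₁ (Ioc_subset_Icc_self hx)]
    · simp [indicator_of_notMem hx]
  refine le_trans (le_of_eq ?_) (eLpNorm_mono hind)
  rw [eLpNorm_indicator_const measurableSet_Ioc (by positivity) ENNReal.ofReal_ne_top,
    Real.volume_Ioc, ENNReal.toReal_ofReal hp.le,
    ENNReal.ofReal_rpow_of_nonneg (by linarith) (by positivity)]
  simp

theorem memLP_plateauForce (p : ℝ) : MemLP (plateauForce r a b c e) p := by
  have hpulse : ∀ u, MemLP (pulse u) p := fun u =>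
    memLp_indicator_const _ measurableSet_Ioc 1 (Or.inr measure_Ioc_lt_top.ne)
  exact (((hpulse b).sub (hpulse a)).const_smul _).sub (((hpulse e).sub (hpulse c)).const_smul _)

theorem lpNorm_plateauForce_le (hH₁ : 0 < riserHeight r a b) (hH₂ : 0 < riserHeight r c e)
    (hp : 1 ≤ p) :
    lpNorm (plateauForce r a b c e) p
      ≤ ENNReal.ofReal (2 * ((riserHeight r a b)⁻¹ + (riserHeight r c e)⁻¹)) := by
  have hp' : (1 : ℝ≥0∞) ≤ ENNReal.ofReal p := by simpa using ENNReal.ofReal_le_ofReal hp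
  have hm : ∀ u, AEStronglyMeasurable (pulse u) volume := fun u =>
    (measurable_const.indicator measurableSet_Ioc).aestronglyMeasurable
  have hdiff : ∀ u v, eLpNorm (pulse v - pulse u) (ENNReal.ofReal p) volume ≤ 2 := fun u v =>
    calc eLpNorm (pulse v - pulse u) (ENNReal.ofReal p) volume
        ≤ eLpNorm (pulse v) (ENNReal.ofReal p) volume
          + eLpNorm (pulse u) (ENNReal.ofReal p) volume :=
          eLpNorm_sub_le (hm v) (hm u) hp'
      _ ≤ 1 + 1 := add_le_add (eLpNorm_pulse_le v _) (eLpNorm_pulse_le u _)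
      _ = 2 := one_add_one_eq_two
  calc lpNorm (plateauForce r a b c e) p
      ≤ eLpNorm ((riserHeight r a b)⁻¹ • (pulse b - pulse a)) (ENNReal.ofReal p) volume
        + eLpNorm ((riserHeight r c e)⁻¹ • (pulse e - pulse c)) (ENNReal.ofReal p) volume :=
        eLpNorm_sub_le (((hm b).sub (hm a)).const_smul _) (((hm e).sub (hm c)).const_smul _) hp'
    _ ≤ ‖(riserHeight r a b)⁻¹‖ₑ * 2 + ‖(riserHeight r c e)⁻¹‖ₑ * 2 := by
        rw [eLpNorm_const_smul, eLpNorm_const_smul]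
        gcongr <;> exact hdiff _ _
    _ = ENNReal.ofReal (2 * ((riserHeight r a b)⁻¹ + (riserHeight r c e)⁻¹)) := by
        rw [Real.enorm_eq_ofReal (inv_nonneg.2 hH₁.le), Real.enorm_eq_ofReal (inv_nonneg.2 hH₂.le),
          ENNReal.ofReal_mul zero_le_two, ENNReal.ofReal_add (inv_nonneg.2 hH₁.le)
          (inv_nonneg.2 hH₂.le), ENNReal.ofReal_ofNat, mul_add, mul_comm 2, mul_comm 2]

end Plateau

theorem CorrectlySolvable.exists_plateau_bound {r q : ℝ → ℝ} {p : ℝ}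
    (hcs : CorrectlySolvable r q p) (hp : 1 ≤ p) (hr : ∀ x, 0 < r x)
    (hrl : LocallyIntegrable fun x => (r x)⁻¹) :
    ∃ C, 0 ≤ C ∧ ∀ a b c e, a ≤ b → b + 1 ≤ c → c ≤ e →
      0 < riserHeight r a b → 0 < riserHeight r c e →
      (∀ᵐ t ∂volume.restrict (Icc a (e + 1)), q t = 0) →
      (c - (b + 1)) ^ (1 / p) ≤ C * ((riserHeight r a b)⁻¹ + (riserHeight r c e)⁻¹) := by
  obtain ⟨C, hC, hbound⟩ := hcs.2
  refine ⟨2 * C, by positivity, fun a b c e hab hbc hce hH₁ hH₂ hq => ?_⟩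
  have h : ENNReal.ofReal ((c - (b + 1)) ^ (1 / p))
      ≤ ENNReal.ofReal (C * (2 * ((riserHeight r a b)⁻¹ + (riserHeight r c e)⁻¹))) :=
    calc ENNReal.ofReal ((c - (b + 1)) ^ (1 / p))
        ≤ lpNorm (plateau r a b c e) p := rpow_le_lpNorm_plateau hrl hab hbc hce hH₁ (by linarith)
      _ ≤ ENNReal.ofReal C * lpNorm (plateauForce r a b c e) p :=
        hbound _ _ (memLP_plateauForce p)
          (isSolution_plateau hr hrl hab (by linarith) hce hH₁ hH₂ hq)
          (memLP_plateau hrl hab (by linarith) hce hH₁ hH₂ p)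
      _ ≤ ENNReal.ofReal C
          * ENNReal.ofReal (2 * ((riserHeight r a b)⁻¹ + (riserHeight r c e)⁻¹)) := by
        gcongr; exact lpNorm_plateauForce_le hH₁ hH₂ hp
      _ = _ := (ENNReal.ofReal_mul hC.le).symm
  rw [ENNReal.ofReal_le_ofReal_iff (by positivity)] at h
  linarith

theorem ae_eq_zero_of_lintegral_ofReal_eq_zero {α : Type*} [MeasurableSpace α] {μ : Measure α}
    {q : α → ℝ} (hq : ∀ x, 0 ≤ q x) (hqm : AEMeasurable q μ)
    (h : ∫⁻ t, ENNReal.ofReal (q t) ∂μ = 0) : ∀ᵐ t ∂μ, q t = 0 :=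
  ((lintegral_eq_zero_iff' hqm.ennreal_ofReal).1 h).mono fun t ht =>
    le_antisymm (ENNReal.ofReal_eq_zero.1 ht) (hq t)

section Cond15

variable {r q : ℝ → ℝ} {p : ℝ}

theorem setLIntegral_Iic_pos_of_correctlySolvable (hr : ∀ x, 0 < r x) (hq : ∀ x, 0 ≤ q x)
    (hrl : LocallyIntegrable fun x => (r x)⁻¹) (hqm : AEMeasurable q)
    (hdiv : ∫⁻ t in Iic 0, ENNReal.ofReal (r t)⁻¹ = ⊤) (hp : 1 ≤ p)
    (hcs : CorrectlySolvable r q p) (x₀ : ℝ) : 0 < ∫⁻ t in Iic x₀, ENNReal.ofReal (q t) := by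
  obtain ⟨C, hC, hbound⟩ := hcs.exists_plateau_bound hp hr hrl
  refine pos_iff_ne_zero.2 fun h0 => ?_
  have hH₂ : 0 < riserHeight r (x₀ - 3) (x₀ - 1) := riserHeight_pos hr hrl (by linarith)
  obtain ⟨L, hLC, hL⟩ := (((tendsto_rpow_atTop (by positivity : 0 < 1 / p)).eventually_gt_atTop
    (C * (1 + (riserHeight r (x₀ - 3) (x₀ - 1))⁻¹))).and (eventually_ge_atTop 0)).exists
  obtain ⟨a, hH₁, hab⟩ := (((tendsto_riserHeight_atBot hr hrl hdiv (x₀ - 4 - L)).eventually_ge_atTop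
    1).and (eventually_le_atBot (x₀ - 4 - L))).exists
  have h := hbound a (x₀ - 4 - L) (x₀ - 3) (x₀ - 1) hab (by linarith) (by linarith)
    (by linarith) hH₂ (ae_restrict_of_ae_restrict_of_subset
      (fun t ht => show t ≤ x₀ by linarith [ht.2])
      (ae_eq_zero_of_lintegral_ofReal_eq_zero hq hqm.restrict h0))
  rw [show x₀ - 3 - (x₀ - 4 - L + 1) = L by ring] at h
  have hle : C * ((riserHeight r a (x₀ - 4 - L))⁻¹ + (riserHeight r (x₀ - 3) (x₀ - 1))⁻¹)
      ≤ C * (1 + (riserHeight r (x₀ - 3) (x₀ - 1))⁻¹) := by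
    gcongr; exact inv_le_one_of_one_le₀ hH₁
  linarith

theorem setLIntegral_Ici_pos_of_correctlySolvable (hr : ∀ x, 0 < r x) (hq : ∀ x, 0 ≤ q x)
    (hrl : LocallyIntegrable fun x => (r x)⁻¹) (hqm : AEMeasurable q)
    (hdiv : ∫⁻ t in Ici 0, ENNReal.ofReal (r t)⁻¹ = ⊤) (hp : 1 ≤ p)
    (hcs : CorrectlySolvable r q p) (x₀ : ℝ) : 0 < ∫⁻ t in Ici x₀, ENNReal.ofReal (q t) := by
  obtain ⟨C, hC, hbound⟩ := hcs.exists_plateau_bound hp hr hrl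
  refine pos_iff_ne_zero.2 fun h0 => ?_
  have hH₁ : 0 < riserHeight r x₀ (x₀ + 2) := riserHeight_pos hr hrl (by linarith)
  obtain ⟨L, hLC, hL⟩ := (((tendsto_rpow_atTop (by positivity : 0 < 1 / p)).eventually_gt_atTop
    (C * ((riserHeight r x₀ (x₀ + 2))⁻¹ + 1))).and (eventually_ge_atTop 0)).exists
  obtain ⟨e, hH₂, hce⟩ := (((tendsto_riserHeight_atTop hr hrl hdiv (x₀ + 3 + L)).eventually_ge_atTop
    1).and (eventually_ge_atTop (x₀ + 3 + L))).exists
  have h := hbound x₀ (x₀ + 2) (x₀ + 3 + L) e (by linarith) (by linarith) hce hH₁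
    (by linarith) (ae_restrict_of_ae_restrict_of_subset Icc_subset_Ici_self
      (ae_eq_zero_of_lintegral_ofReal_eq_zero hq hqm.restrict h0))
  rw [show x₀ + 3 + L - (x₀ + 2 + 1) = L by ring] at h
  have hle : C * ((riserHeight r x₀ (x₀ + 2))⁻¹ + (riserHeight r (x₀ + 3 + L) e)⁻¹)
      ≤ C * ((riserHeight r x₀ (x₀ + 2))⁻¹ + 1) := by
    gcongr; exact inv_le_one_of_one_le₀ hH₂
  linarith

end Cond15

theorem Filter.Tendsto.atTop_mul_of_tendsto_ofReal {α : Type*} {l : Filter α} {F G : α → ℝ}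
    {L : ℝ≥0∞} (hF : Tendsto F l atTop) (hG : Tendsto (fun a => ENNReal.ofReal (G a)) l (𝓝 L))
    (hL : L ≠ 0) : Tendsto (fun a => F a * G a) l atTop := by
  rw [← ENNReal.tendsto_ofReal_nhds_top]
  have h := ENNReal.Tendsto.mul (ENNReal.tendsto_ofReal_nhds_top.2 hF)
    (Or.inl ENNReal.top_ne_zero) hG (Or.inl hL)
  rw [ENNReal.top_mul hL] at h
  refine h.congr' ?_
  filter_upwards [hF.eventually_ge_atTop 0] with a ha
  rw [ENNReal.ofReal_mul ha]

theorem cond16_of_cond15 {r q : ℝ → ℝ} (hr : ∀ x, 0 < r x) (hq : ∀ x, 0 ≤ q x)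
    (hrl : LocallyIntegrable fun x => (r x)⁻¹) (hql : LocallyIntegrable q) (h14 : Cond14 r)
    (h15 : Cond15 q) : Cond16 r q := by
  intro x
  have hr' : ∀ t, 0 ≤ (r t)⁻¹ := fun t => (inv_pos.2 (hr t)).le
  rw [tendsto_sup]
  constructor
  · have hshift : Tendsto (fun d : ℝ => x - d) atTop atBot := by
      simpa only [sub_eq_add_neg] using tendsto_atBot_add_const_left _ x tendsto_neg_atTop_atBot
    refine (((tendsto_intervalIntegral_atBot hr' hrl h14.1 x).atTop_mul_of_tendsto_ofReal
      (tendsto_ofReal_intervalIntegral_atBot hq hql x) (h15 x).1.ne').comp hshift).congr' ?_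
    filter_upwards [eventually_ge_atTop 0] with d hd
    simp only [Function.comp, uIoc_of_le (by linarith : x - d ≤ x),
      intervalIntegral.integral_of_le (by linarith : x - d ≤ x)]
  · have hshift : Tendsto (fun d : ℝ => x - d) atBot atTop := by
      simpa only [sub_eq_add_neg] using tendsto_atTop_add_const_left _ x tendsto_neg_atBot_atTop
    refine (((tendsto_intervalIntegral_atTop hr' hrl h14.2 x).atTop_mul_of_tendsto_ofReal
      (tendsto_ofReal_intervalIntegral_atTop hq hql x) (h15 x).2.ne').comp hshift).congr' ?_
    filter_upwards [eventually_le_atBot 0] with d hd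
    simp only [Function.comp, uIoc_of_ge (by linarith : x ≤ x - d),
      intervalIntegral.integral_of_le (by linarith : x ≤ x - d)]

/-- Theorem 1.1: under (1.2) and (1.4), correct solvability in `L_p`,
`p ∈ [1,∞)`, implies conditions (1.5) and (1.6). -/
theorem stmt_0 (r q : ℝ → ℝ) (h12 : Cond12 r q) (h14 : Cond14 r)
    (p : ℝ) (hp : 1 ≤ p) (hcs : CorrectlySolvable r q p) :
    Cond15 q ∧ Cond16 r q := by
  obtain ⟨hr, hq, hrl, hql⟩ := h12
  have hqm : AEMeasurable q := hql.aestronglyMeasurable.aemeasurable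
  have h15 : Cond15 q := fun x =>
    ⟨setLIntegral_Iic_pos_of_correctlySolvable hr hq hrl hqm h14.1 hp hcs x,
      setLIntegral_Ici_pos_of_correctlySolvable hr hq hrl hqm h14.2 hp hcs x⟩
  exact ⟨h15, cond16_of_cond15 hr hq hrl hql h14 h15⟩

end
end

section
/- Suppose conditions (1.2) and (1.5) hold and the equation -(r(x)y'(x))' + q(x)y(x) = f(x) is correctly solvable in L_p(ℝ) for some p ∈ [1,∞). Then for every f ∈ L_p(ℝ), the unique solution y ∈ L_p(ℝ) is given by y(x) = ∫_{-∞}^∞ G(x,t)f(t)dt for x ∈ ℝ. -/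
open MeasureTheory Set Filter
open scoped ENNReal

noncomputable section

/-
Variation of constants: for a solution `y` put `A = W(y, v)` and `B = W(y, u)`, where
`W(y, z) = r (y z' - y' z)`. Then `A' = v f`, `B' = u f` and `y = A u - B v`.

At `-∞`: correct solvability gives an `L_p` solution `w` of the equation with right-hand side
`|f|`. For `x ≤ c` it satisfies `w(x)/u(x) ≤ W(w, v)(0) - ∫_c^0 v |f| + o(1)` as `x → -∞`,
and `|w| ≥ ε u(0)` on a half-line is impossible in `L_p`, so `v f` is integrable near `-∞`.
Then `A → A(-∞)`, while `B v/u → 0` by dominated convergence, because `(v(x)/u(x)) u(t) ≤ v(t)`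
for `x ≤ t`. Hence `y/u → A(-∞)`, which must vanish as `y ∈ L_p`; this gives
`A(x) = ∫_{-∞}^x v f`.

The end `+∞` is the end `-∞` of the equation reflected by `x ↦ -x`, which exchanges `u` and `v`
and gives `B(x) = -∫_x^∞ u f`.
-/

open Topology

namespace MeasureTheory.MemLp

theorem intervalIntegrable {E : Type*} [NormedAddCommGroup E] {f : ℝ → E} {p : ℝ≥0∞}
    (hf : MemLp f p volume) (hp : 1 ≤ p) (a b : ℝ) : IntervalIntegrable f volume a b :=
  ((hf.locallyIntegrable hp).integrableOn_isCompact isCompact_uIcc).intervalIntegrable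

theorem comp_neg {E : Type*} [NormedAddCommGroup E] {f : ℝ → E} {p : ℝ≥0∞}
    (hf : MemLp f p volume) : MemLp (fun x => f (-x)) p volume :=
  hf.comp_measurePreserving (Measure.measurePreserving_neg volume)

theorem not_eventually_le_abs_atBot {g : ℝ → ℝ} {p : ℝ≥0∞} (hg : MemLp g p volume)
    (hp0 : p ≠ 0) (hp : p ≠ ∞) {ε : ℝ} (hε : 0 < ε) : ¬ ∀ᶠ x in atBot, ε ≤ |g x| := by
  intro h
  obtain ⟨x₀, hx₀⟩ := eventually_atBot.1 h
  have hsub : Iic x₀ ⊆ {x | ENNReal.ofReal ε ≤ ‖g x‖ₑ} := fun x hx => by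
    rw [mem_ofPred_eq, ← ofReal_norm, Real.norm_eq_abs]
    exact ENNReal.ofReal_le_ofReal (hx₀ x hx)
  have := (measure_mono hsub).trans_lt
    (hg.meas_ge_lt_top'_enorm hp0 hp (by simpa using hε) (by simp))
  simp at this

end MeasureTheory.MemLp

theorem absolutelyContinuousOnInterval_of_eq_add_integral {F φ : ℝ → ℝ} {x : ℝ}
    (hφ : IntervalIntegrable φ volume 0 x) (hF : ∀ t, F t = F 0 + ∫ s in (0:ℝ)..t, φ s) :
    AbsolutelyContinuousOnInterval F 0 x := by
  rw [funext hF]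
  exact (LipschitzWith.const (F 0)).lipschitzOnWith.absolutelyContinuousOnInterval.add
    (hφ.absolutelyContinuousOnInterval_intervalIntegral (by simp))

theorem ae_hasDerivAt_of_eq_add_integral {F φ : ℝ → ℝ} {x : ℝ}
    (hφ : IntervalIntegrable φ volume 0 x) (hF : ∀ t, F t = F 0 + ∫ s in (0:ℝ)..t, φ s) :
    ∀ᵐ t, t ∈ uIcc 0 x → HasDerivAt F (φ t) t := by
  rw [funext hF]
  filter_upwards [hφ.ae_hasDerivAt_integral] with t ht htx
  exact (ht htx 0 (by simp)).const_add _

theorem mul_eq_add_integral {F G φ ψ : ℝ → ℝ} {x : ℝ}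
    (hφ : IntervalIntegrable φ volume 0 x) (hψ : IntervalIntegrable ψ volume 0 x)
    (hF : ∀ t, F t = F 0 + ∫ s in (0:ℝ)..t, φ s) (hG : ∀ t, G t = G 0 + ∫ s in (0:ℝ)..t, ψ s) :
    F x * G x = F 0 * G 0 + ∫ t in (0:ℝ)..x, (φ t * G t + F t * ψ t) := by
  have hprod := (absolutelyContinuousOnInterval_of_eq_add_integral hφ hF).integral_deriv_mul_eq_sub
    (absolutelyContinuousOnInterval_of_eq_add_integral hψ hG)
  rw [intervalIntegral.integral_congr_ae (g := fun t => deriv F t * G t + F t * deriv G t)]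
  · linarith
  filter_upwards [ae_hasDerivAt_of_eq_add_integral hφ hF, ae_hasDerivAt_of_eq_add_integral hψ hG]
    with t hFt hGt ht
  rw [(hFt (uIoc_subset_uIcc ht)).deriv, (hGt (uIoc_subset_uIcc ht)).deriv]

theorem monotone_of_eq_add_integral {z z' : ℝ → ℝ}
    (hz' : ∀ a b, IntervalIntegrable z' volume a b)
    (hz : ∀ x, z x = z 0 + ∫ t in (0:ℝ)..x, z' t) (hnonneg : ∀ t, 0 ≤ z' t) : Monotone z := by
  intro s t hst
  rw [hz s, hz t, ← intervalIntegral.integral_add_adjacent_intervals (hz' 0 s) (hz' s t)]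
  linarith [intervalIntegral.integral_nonneg (μ := volume) hst fun τ _ => hnonneg τ]

theorem antitone_of_eq_add_integral {z z' : ℝ → ℝ}
    (hz' : ∀ a b, IntervalIntegrable z' volume a b)
    (hz : ∀ x, z x = z 0 + ∫ t in (0:ℝ)..x, z' t) (hnonpos : ∀ t, z' t ≤ 0) : Antitone z := by
  have hneg := monotone_of_eq_add_integral (z := fun x => -z x) (z' := fun t => -z' t)
    (fun a b => (hz' a b).neg) (fun x => by rw [hz x, intervalIntegral.integral_neg]; ring)
    fun t => neg_nonneg.2 (hnonpos t)
  exact fun s t hst => neg_le_neg_iff.1 (hneg hst)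

namespace IsSolutionWith

variable {r q f y y' : ℝ → ℝ}

theorem continuous (hy : IsSolutionWith r q f y y') : Continuous y := by
  rw [funext hy.2.1]
  exact continuous_const.add (intervalIntegral.continuous_primitive hy.1 0)

theorem continuous_mul_deriv (hy : IsSolutionWith r q f y y') :
    Continuous fun x => r x * y' x := by
  rw [funext hy.2.2.2]
  exact continuous_const.add (intervalIntegral.continuous_primitive hy.2.2.1 0)

theorem comp_neg (hy : IsSolutionWith r q f y y') :
    IsSolutionWith (fun x => r (-x)) (fun x => q (-x)) (fun x => f (-x)) (fun x => y (-x))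
      (fun x => -y' (-x)) := by
  obtain ⟨hy', hy, hrhs, hry'⟩ := hy
  refine ⟨fun a b => ?_, fun x => ?_, fun a b => ?_, fun x => ?_⟩
  · have := (IntervalIntegrable.iff_comp_neg).1 (hy' (-a) (-b))
    rw [neg_neg, neg_neg] at this
    exact this.neg
  · beta_reduce
    rw [hy (-x), neg_zero, intervalIntegral.integral_neg, intervalIntegral.integral_comp_neg,
      neg_zero, ← intervalIntegral.integral_symm]
  · have := (IntervalIntegrable.iff_comp_neg).1 (hrhs (-a) (-b))
    rwa [neg_neg, neg_neg] at this
  · have := hry' (-x)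
    beta_reduce
    rw [intervalIntegral.integral_comp_neg (fun t => q t * y t - f t), neg_zero,
      intervalIntegral.integral_symm]
    linarith

end IsSolutionWith

def wronskian (r y y' z z' : ℝ → ℝ) (x : ℝ) : ℝ := r x * (y x * z' x - y' x * z x)

theorem IsSolutionWith.wronskian_eq_add_integral {r q f y y' z z' : ℝ → ℝ}
    (hy : IsSolutionWith r q f y y') (hz : IsSolutionHom r q z z') (x : ℝ) :
    wronskian r y y' z z' x = wronskian r y y' z z' 0 + ∫ t in (0:ℝ)..x, z t * f t := by
  have hyz := mul_eq_add_integral (hy.1 0 x) (hz.2.2.1 0 x) hy.2.1 hz.2.2.2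
  have hyz' := mul_eq_add_integral (hy.2.2.1 0 x) (hz.1 0 x) hy.2.2.2 hz.2.1
  have hint := ((hy.1 0 x).mul_continuousOn hz.continuous_mul_deriv.continuousOn).add
    ((hz.2.2.1 0 x).continuousOn_mul hy.continuous.continuousOn)
  have hint' := ((hy.2.2.1 0 x).mul_continuousOn hz.continuous.continuousOn).add
    ((hz.1 0 x).continuousOn_mul hy.continuous_mul_deriv.continuousOn)
  have hzf : ∫ t in (0:ℝ)..x, z t * f t =
      (∫ t in (0:ℝ)..x, (y' t * (r t * z' t) + y t * (q t * z t - 0))) -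
        ∫ t in (0:ℝ)..x, ((q t * y t - f t) * z t + r t * y' t * z' t) := by
    rw [← intervalIntegral.integral_sub hint hint']
    congr 1 with t
    ring
  rw [wronskian, wronskian, hzf]
  linear_combination hyz - hyz'

theorem eq_wronskian_mul_sub {r u u' v v' : ℝ → ℝ} {x : ℝ} (hW : wronskian r u u' v v' x = 1)
    (y y' : ℝ → ℝ) : y x = wronskian r y y' v v' x * u x - wronskian r y y' u u' x * v x := by
  simp only [wronskian] at hW ⊢
  linear_combination (-y x) * hW

/-- The part of `IsFSS` that controls the end `-∞`. The end `+∞` is reduced to it by the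
reflection `x ↦ -x`, which exchanges the roles of `u` and `v` (`IsFSS.isFSSAtBot_comp_neg`). -/
structure IsFSSAtBot (r q u u' v v' : ℝ → ℝ) : Prop where
  hom_u : IsSolutionHom r q u u'
  hom_v : IsSolutionHom r q v v'
  pos_u : ∀ x, 0 < u x
  pos_v : ∀ x, 0 < v x
  antitone_u : Antitone u
  monotone_v : Monotone v
  wronskian_eq_one : ∀ x, wronskian r u u' v v' x = 1
  tendsto_div : Tendsto (fun x => v x / u x) atBot (𝓝 0)

theorem IsFSS.isFSSAtBot {r q u u' v v' : ℝ → ℝ} (h : IsFSS r q u u' v v') :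
    IsFSSAtBot r q u u' v v' := by
  obtain ⟨hu, hv, hu_pos, hv_pos, hv', hu', hW, hvu, -⟩ := h
  exact ⟨hu, hv, hu_pos, hv_pos, antitone_of_eq_add_integral hu.1 hu.2.1 hu',
    monotone_of_eq_add_integral hv.1 hv.2.1 hv', fun x => by rw [wronskian, ← hW x]; ring, hvu⟩

theorem IsFSS.isFSSAtBot_comp_neg {r q u u' v v' : ℝ → ℝ} (h : IsFSS r q u u' v v') :
    IsFSSAtBot (fun x => r (-x)) (fun x => q (-x)) (fun x => v (-x)) (fun x => -v' (-x))
      (fun x => u (-x)) (fun x => -u' (-x)) := by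
  obtain ⟨hu, hv, hu_pos, hv_pos, hv', hu', hW, -, huv, -⟩ := h
  exact ⟨hv.comp_neg, hu.comp_neg, fun _ => hv_pos _, fun _ => hu_pos _,
    fun _ _ hst => monotone_of_eq_add_integral hv.1 hv.2.1 hv' (neg_le_neg hst),
    fun _ _ hst => antitone_of_eq_add_integral hu.1 hu.2.1 hu' (neg_le_neg hst),
    fun x => by rw [wronskian, ← hW (-x)]; ring, huv.comp tendsto_neg_atBot_atTop⟩

namespace IsFSSAtBot

variable {r q u u' v v' : ℝ → ℝ} (hUV : IsFSSAtBot r q u u' v v')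
include hUV

theorem div_mul_le {x t : ℝ} (hxt : x ≤ t) : v x / u x * u t ≤ v t := by
  rw [div_mul_eq_mul_div, div_le_iff₀ (hUV.pos_u x)]
  exact mul_le_mul (hUV.monotone_v hxt) (hUV.antitone_u hxt) (hUV.pos_u t).le (hUV.pos_v t).le

theorem div_mul_integral_le {g : ℝ → ℝ} (hg : ∀ a b, IntervalIntegrable g volume a b)
    (hg_nonneg : ∀ t, 0 ≤ g t) {x c : ℝ} (hxc : x ≤ c) :
    v x / u x * ∫ t in x..c, u t * g t ≤ ∫ t in x..c, v t * g t := by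
  rw [← intervalIntegral.integral_const_mul]
  refine intervalIntegral.integral_mono_on hxc
    ((hg x c).continuousOn_mul hUV.hom_u.continuous.continuousOn |>.const_mul _)
    ((hg x c).continuousOn_mul hUV.hom_v.continuous.continuousOn) fun t ht => ?_
  rw [← mul_assoc]
  exact mul_le_mul_of_nonneg_right (hUV.div_mul_le ht.1) (hg_nonneg t)

theorem not_eventually_le_abs_div {w : ℝ → ℝ} {p : ℝ≥0∞} (hw : MemLp w p volume) (hp0 : p ≠ 0)
    (hp : p ≠ ∞) {ε : ℝ} (hε : 0 < ε) : ¬ ∀ᶠ x in atBot, ε ≤ |w x / u x| := by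
  intro h
  refine hw.not_eventually_le_abs_atBot hp0 hp (mul_pos hε (hUV.pos_u 0)) ?_
  filter_upwards [h, eventually_le_atBot 0] with x hx hx0
  calc ε * u 0 ≤ |w x / u x| * u x :=
        mul_le_mul hx (hUV.antitone_u hx0) (hUV.pos_u 0).le (abs_nonneg _)
    _ = |w x| := by rw [abs_div, abs_of_pos (hUV.pos_u x), div_mul_cancel₀ _ (hUV.pos_u x).ne']

theorem tendsto_div_mul_integral {g : ℝ → ℝ} (hg : AEStronglyMeasurable g volume)
    (hvg : IntegrableOn (fun t => v t * g t) (Iic 0)) :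
    Tendsto (fun x => v x / u x * ∫ t in x..0, u t * g t) atBot (𝓝 0) := by
  set F : ℝ → ℝ → ℝ := fun x => (Ioc x 0).indicator fun t => v x / u x * (u t * g t)
  have hF : ∀ᶠ x in atBot, ∫ t in Iic 0, F x t = v x / u x * ∫ t in x..0, u t * g t := by
    filter_upwards [eventually_le_atBot 0] with x hx
    rw [integral_indicator measurableSet_Ioc, Measure.restrict_restrict measurableSet_Ioc,
      inter_eq_left.2 Ioc_subset_Iic_self, integral_const_mul, intervalIntegral.integral_of_le hx]
  have hlim := tendsto_integral_filter_of_dominated_convergence (l := atBot)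
    (μ := volume.restrict (Iic 0)) (F := F) (f := fun _ => 0) (fun t => ‖v t * g t‖) ?_ ?_
    hvg.norm ?_
  · simpa using hlim.congr' hF
  · exact Eventually.of_forall fun x => ((aestronglyMeasurable_const.mul
      (hUV.hom_u.continuous.aestronglyMeasurable.mul hg)).indicator measurableSet_Ioc).restrict
  · refine Eventually.of_forall fun x => Eventually.of_forall fun t => ?_
    by_cases ht : t ∈ Ioc x 0
    · have hs : 0 ≤ v x / u x := (div_pos (hUV.pos_v x) (hUV.pos_u x)).le
      simp only [F, indicator_of_mem ht, norm_mul, Real.norm_of_nonneg hs,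
        Real.norm_of_nonneg (hUV.pos_u t).le, Real.norm_of_nonneg (hUV.pos_v t).le, ← mul_assoc]
      exact mul_le_mul_of_nonneg_right (hUV.div_mul_le ht.1.le) (norm_nonneg _)
    · simp only [F, indicator_of_notMem ht, norm_zero]
      positivity
  · refine Eventually.of_forall fun t =>
      squeeze_zero_norm (fun x => norm_indicator_le_norm_self _ _) ?_
    simpa using (hUV.tendsto_div.mul_const (u t * g t)).norm

theorem div_le_sub_integral {g w w' : ℝ → ℝ} (hg : ∀ a b, IntervalIntegrable g volume a b)
    (hg_nonneg : ∀ t, 0 ≤ g t) (hw : IsSolutionWith r q g w w') {x c : ℝ} (hxc : x ≤ c) :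
    w x / u x ≤ wronskian r w w' v v' 0 - (∫ t in c..0, v t * g t) +
      v x / u x * (|wronskian r w w' u u' 0| + ∫ t in c..0, u t * g t) := by
  have hs : 0 ≤ v x / u x := (div_pos (hUV.pos_v x) (hUV.pos_u x)).le
  have hsplit (z z' : ℝ → ℝ) (hz : IsSolutionHom r q z z') : wronskian r w w' z z' x =
      wronskian r w w' z z' 0 - (∫ t in x..c, z t * g t) - ∫ t in c..0, z t * g t := by
    rw [hw.wronskian_eq_add_integral hz x, intervalIntegral.integral_symm,
      ← intervalIntegral.integral_add_adjacent_intervals (a := x) (b := c) ?_ ?_]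
    · ring
    all_goals exact (hg _ _).continuousOn_mul hz.continuous.continuousOn
  have hcross := hUV.div_mul_integral_le hg hg_nonneg hxc
  have hb := mul_nonneg hs (neg_le_iff_add_nonneg.1 (neg_abs_le (wronskian r w w' u u' 0)))
  rw [eq_wronskian_mul_sub (hUV.wronskian_eq_one x) w w', sub_div,
    mul_div_cancel_right₀ _ (hUV.pos_u x).ne', mul_div_assoc, hsplit v v' hUV.hom_v,
    hsplit u u' hUV.hom_u]
  linarith

theorem integrableOn_mul_Iic_of_nonneg {g w w' : ℝ → ℝ} {p : ℝ≥0∞} (hp0 : p ≠ 0) (hp : p ≠ ∞)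
    (hg : ∀ a b, IntervalIntegrable g volume a b) (hg_nonneg : ∀ t, 0 ≤ g t)
    (hw : IsSolutionWith r q g w w') (hwLp : MemLp w p volume) :
    IntegrableOn (fun t => v t * g t) (Iic 0) := by
  set a₀ := wronskian r w w' v v' 0
  have hbound (c : ℝ) : ∫ t in c..0, v t * g t ≤ a₀ := by
    by_contra! hlt
    set ε := ((∫ t in c..0, v t * g t) - a₀) / 2
    have hlim : Tendsto (fun x => a₀ - (∫ t in c..0, v t * g t) +
        v x / u x * (|wronskian r w w' u u' 0| + ∫ t in c..0, u t * g t)) atBot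
        (𝓝 (a₀ - ∫ t in c..0, v t * g t)) := by
      simpa using (hUV.tendsto_div.mul_const _).const_add _
    refine hUV.not_eventually_le_abs_div hwLp hp0 hp (ε := ε) (by simp only [ε]; linarith) ?_
    filter_upwards [hlim.eventually (gt_mem_nhds (show _ < -ε by simp only [ε]; linarith)),
      eventually_le_atBot c] with x hx hxc
    exact le_abs.2 (Or.inr (by linarith [hUV.div_le_sub_integral hg hg_nonneg hw hxc]))
  refine integrableOn_Iic_of_intervalIntegral_norm_bounded a₀ 0
    (fun c => ((hg c 0).continuousOn_mul hUV.hom_v.continuous.continuousOn).1) tendsto_id ?_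
  simp_rw [Real.norm_of_nonneg (mul_nonneg (hUV.pos_v _).le (hg_nonneg _))]
  exact Eventually.of_forall hbound

theorem integrableOn_mul_Iic {f w w' : ℝ → ℝ} {p : ℝ≥0∞} (hp1 : 1 ≤ p) (hp : p ≠ ∞)
    (hf : MemLp f p volume) (hw : IsSolutionWith r q (fun t => |f t|) w w')
    (hwLp : MemLp w p volume) (x : ℝ) : IntegrableOn (fun t => v t * f t) (Iic x) := by
  have hvf a b :=
    (hf.intervalIntegrable hp1 a b).continuousOn_mul hUV.hom_v.continuous.continuousOn
  have habs := hUV.integrableOn_mul_Iic_of_nonneg (zero_lt_one.trans_le hp1).ne' hp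
    (fun a b => (hf.intervalIntegrable hp1 a b).abs) (fun t => abs_nonneg _) hw hwLp
  have h0 : IntegrableOn (fun t => v t * f t) (Iic 0) :=
    habs.mono' (hUV.hom_v.continuous.aestronglyMeasurable.mul hf.1).restrict
      (Eventually.of_forall fun t => by rw [norm_mul, Real.norm_of_nonneg (hUV.pos_v t).le]; rfl)
  rcases le_total x 0 with hx | hx
  · exact h0.mono_set (Iic_subset_Iic.2 hx)
  · rw [← Iic_union_Ioc_eq_Iic hx]
    exact h0.union (hvf 0 x).1

theorem wronskian_eq_integral_Iic {f y y' w w' : ℝ → ℝ} {p : ℝ≥0∞} (hp1 : 1 ≤ p) (hp : p ≠ ∞)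
    (hf : MemLp f p volume) (hy : IsSolutionWith r q f y y') (hyLp : MemLp y p volume)
    (hw : IsSolutionWith r q (fun t => |f t|) w w') (hwLp : MemLp w p volume) (x : ℝ) :
    wronskian r y y' v v' x = ∫ t in Iic x, v t * f t := by
  have hvf := hUV.integrableOn_mul_Iic hp1 hp hf hw hwLp
  have hrep (z z' : ℝ → ℝ) (hz : IsSolutionHom r q z z') (x : ℝ) :
      wronskian r y y' z z' x = wronskian r y y' z z' 0 - ∫ t in x..0, z t * f t := by
    rw [hy.wronskian_eq_add_integral hz x, intervalIntegral.integral_symm]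
    ring
  set L := wronskian r y y' v v' 0 - ∫ t in Iic 0, v t * f t
  have hlim : Tendsto (fun x => y x / u x) atBot (𝓝 L) := by
    have hv := (intervalIntegral_tendsto_integral_Iic 0 (hvf 0) tendsto_id).const_sub
      (wronskian r y y' v v' 0)
    have hu := (hUV.tendsto_div.const_mul (wronskian r y y' u u' 0)).sub
      (hUV.tendsto_div_mul_integral hf.1 (hvf 0))
    rw [mul_zero, sub_zero] at hu
    rw [← sub_zero L]
    refine (hv.sub hu).congr fun x => ?_
    rw [id, eq_wronskian_mul_sub (hUV.wronskian_eq_one x) y y', hrep v v' hUV.hom_v x,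
      hrep u u' hUV.hom_u x, sub_div, mul_div_cancel_right₀ _ (hUV.pos_u x).ne']
    ring
  have hL : L = 0 := by
    by_contra hL
    refine hUV.not_eventually_le_abs_div hyLp (zero_lt_one.trans_le hp1).ne' hp
      (ε := |L| / 2) (by positivity) ?_
    exact (hlim.abs.eventually_const_lt (half_lt_self (abs_pos.2 hL))).mono fun x hx => hx.le
  rw [hy.wronskian_eq_add_integral hUV.hom_v x,
    ← intervalIntegral.integral_Iic_sub_Iic (hvf 0) (hvf x)]
  linarith

end IsFSSAtBot

theorem stmt_3_general (r q u u' v v' : ℝ → ℝ)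
    (hFSS : IsFSS r q u u' v v') (p : ℝ) (hp : 1 ≤ p)
    (hcs : CorrectlySolvable r q p) :
    ∀ f : ℝ → ℝ, MemLP f p → ∀ y : ℝ → ℝ, IsSolution r q f y → MemLP y p →
      ∀ x : ℝ, y x = greenOp u v f x := by
  intro f hf y ⟨y', hy⟩ hyLp x
  obtain ⟨w, ⟨⟨w', hw⟩, hwLp⟩, -⟩ := hcs.1 (fun t => |f t|) hf.abs
  have hp1 : 1 ≤ ENNReal.ofReal p := by simpa using ENNReal.ofReal_le_ofReal hp
  have hG₁ : wronskian r y y' v v' x = ∫ t in Iic x, v t * f t :=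
    hFSS.isFSSAtBot.wronskian_eq_integral_Iic hp1 ENNReal.ofReal_ne_top hf hy hyLp hw hwLp x
  have hG₂ : -wronskian r y y' u u' x = ∫ t in Ici x, u t * f t := by
    have h := hFSS.isFSSAtBot_comp_neg.wronskian_eq_integral_Iic hp1 ENNReal.ofReal_ne_top
      hf.comp_neg hy.comp_neg hyLp.comp_neg hw.comp_neg hwLp.comp_neg (-x)
    rw [integral_comp_neg_Iic (f := fun t => u t * f t), neg_neg,
      ← integral_Ici_eq_integral_Ioi] at h
    rw [← h, wronskian, wronskian, neg_neg]
    ring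
  rw [eq_wronskian_mul_sub (hFSS.isFSSAtBot.wronskian_eq_one x) y y', greenOp, G1op, G2op, hG₁,
    ← hG₂]
  ring

/-- Corollary 1.5: under (1.2), (1.5) and correct solvability in `L_p`,
for every `f ∈ L_p` the unique solution `y ∈ L_p` equals `(G f)(x) = ∫_ℝ G(x,t)f(t)dt`. -/
theorem stmt_3 (r q u u' v v' : ℝ → ℝ) (h12 : Cond12 r q) (h15 : Cond15 q)
    (hFSS : IsFSS r q u u' v v') (p : ℝ) (hp : 1 ≤ p)
    (hcs : CorrectlySolvable r q p) :
    ∀ f : ℝ → ℝ, MemLP f p → ∀ y : ℝ → ℝ, IsSolution r q f y → MemLP y p →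
      ∀ x : ℝ, y x = greenOp u v f x :=
  stmt_3_general r q u u' v v' hFSS p hp hcs

end
end

section
/- Suppose conditions (1.2) and (1.6) hold. Then: (i) for every x ∈ ℝ, each of the equations (∫_{x-d}^x dt/r(t))·(∫_{x-d}^x q(t)dt) = 1 and (∫_x^{x+d} dt/r(t))·(∫_x^{x+d} q(t)dt) = 1 has a unique finite positive solution d ≥ 0, denoted d₁(x) and d₂(x) respectively; (ii) setting φ(x) = ∫_{x-d₁(x)}^x dt/r(t), ψ(x) = ∫_x^{x+d₂(x)} dt/r(t), and h(x) = φ(x)ψ(x)/(φ(x)+ψ(x)), for every x ∈ ℝ the equation ∫_{x-d}^{x+d} dt/(r(t)h(t)) = 1 has a unique finite positive solution d ≥ 0, denoted d(x); (iii) the function d(x) is continuous on ℝ; and (iv) x + d(x) → −∞ as x → −∞ and x − d(x) → +∞ as x → +∞. -/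
open MeasureTheory Set Filter
open scoped ENNReal

noncomputable section

/-!
Write `R` and `Q` for primitives of `1/r` and `q`. Then
`F₁(x, d) = (R x - R (x - d)) (Q x - Q (x - d))` vanishes at `d = 0`, tends to `∞` by (1.6), and
once it is `≥ 1` it keeps increasing strictly, because `R` is strictly increasing and `Q`
nondecreasing. This gives `d₁`, `d₂`, their continuity (a level set of a function that is
continuous in `x` and crosses `1` only once), and the monotonicity of `x - d₁ x` and `x + d₂ x`.

With `P` a primitive of `1/(r h)`, equation (1.18) reads `P (x + d) - P (x - d) = 1`, so (ii)-(iv)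
follow once the strictly increasing `P` tends to `±∞`. As `h ≤ min φ ψ`, on `[0, ∞)` either
`h ≤ sup R - R` (if `R` is bounded) or `h ≤ R - R (-d₁ 0)` (by the monotonicity of `x - d₁ x`);
in both cases `∫ dR / h` diverges, since every halving of `sup R - R`, respectively every
doubling of `R - R (-d₁ 0)`, adds `1/2` to `P`. The limit at `-∞` follows by reflection.
-/

def CrossesOneOnce (k : ℝ → ℝ) : Prop :=
  ∀ ⦃a b : ℝ⦄, 0 < a → a < b → 1 ≤ k a → 1 < k b

theorem StrictMono.crossesOneOnce {k : ℝ → ℝ} (hk : StrictMono k) : CrossesOneOnce k :=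
  fun _ _ _ hab h1 => h1.trans_lt (hk hab)

namespace CrossesOneOnce

variable {k : ℝ → ℝ} {d e : ℝ}

theorem lt_one (hk : CrossesOneOnce k) (hd : k d = 1) (he : 0 < e) (hed : e < d) : k e < 1 :=
  lt_of_not_ge fun h => (hk he hed h).ne' hd

theorem one_lt (hk : CrossesOneOnce k) (hd0 : 0 < d) (hd : k d = 1) (hde : d < e) : 1 < k e :=
  hk hd0 hde hd.ge

theorem lt_one_iff (hk : CrossesOneOnce k) (hd0 : 0 < d) (hd : k d = 1) (he : 0 < e) :
    k e < 1 ↔ e < d := by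
  refine ⟨fun h => lt_of_not_ge fun hde => ?_, hk.lt_one hd he⟩
  rcases hde.eq_or_lt with rfl | hde
  · exact h.ne hd
  · linarith [hk.one_lt hd0 hd hde]

theorem one_lt_iff (hk : CrossesOneOnce k) (hd0 : 0 < d) (hd : k d = 1) (he : 0 < e) :
    1 < k e ↔ d < e := by
  refine ⟨fun h => lt_of_not_ge fun hed => ?_, hk.one_lt hd0 hd⟩
  rcases hed.eq_or_lt with rfl | hed
  · exact h.ne' hd
  · linarith [hk.lt_one hd he hed]

theorem existsUnique (hk : CrossesOneOnce k) (hc : Continuous k) (h0 : k 0 < 1)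
    (htop : Tendsto k atTop atTop) : ∃! d, 0 < d ∧ k d = 1 := by
  obtain ⟨D, hD, hD0⟩ := ((htop.eventually_gt_atTop 1).and (eventually_ge_atTop 0)).exists
  obtain ⟨d, ⟨hd_nonneg, -⟩, hd⟩ := intermediate_value_Icc hD0 hc.continuousOn ⟨h0.le, hD.le⟩
  have hd0 : 0 < d := hd_nonneg.lt_of_ne (by rintro rfl; exact h0.ne hd)
  refine ⟨d, ⟨hd0, hd⟩, fun e ⟨he0, he⟩ => ?_⟩
  rcases lt_trichotomy e d with hed | rfl | hde
  · exact absurd he (hk.lt_one hd he0 hed).ne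
  · rfl
  · exact absurd he (hk.one_lt hd0 hd hde).ne'

end CrossesOneOnce

/-- For `a, b > 0` the sets `{x | d x < b}` and `{x | a < d x}` are the open sets
`{x | 1 < G x b}` and `{x | G x a < 1}`. -/
theorem continuous_of_crossesOneOnce {G : ℝ → ℝ → ℝ} {d : ℝ → ℝ}
    (hG : ∀ e, Continuous fun x => G x e) (hk : ∀ x, CrossesOneOnce (G x))
    (hd : ∀ x, 0 < d x ∧ G x (d x) = 1) : Continuous d := by
  refine continuous_iff_continuousAt.2 fun x => tendsto_order.2 ⟨fun a ha => ?_, fun b hb => ?_⟩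
  · rcases le_or_gt a 0 with ha0 | ha0
    · exact Eventually.of_forall fun y => ha0.trans_lt (hd y).1
    · have hxa : G x a < 1 := (hk x).lt_one (hd x).2 ha0 ha
      filter_upwards [(hG a).continuousAt.eventually_lt continuousAt_const hxa] with y hy
      exact ((hk y).lt_one_iff (hd y).1 (hd y).2 ha0).1 hy
  · have hxb : 1 < G x b := (hk x).one_lt (hd x).1 (hd x).2 hb
    filter_upwards [continuousAt_const.eventually_lt (hG b).continuousAt hxb] with y hy
    exact ((hk y).one_lt_iff (hd y).1 (hd y).2 ((hd x).1.trans hb)).1 hy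

def prim (w : ℝ → ℝ) (x : ℝ) : ℝ := ∫ t in (0 : ℝ)..x, w t

section Primitive

variable {w : ℝ → ℝ}

theorem integral_eq_prim_sub (hw : ∀ a b, IntervalIntegrable w volume a b) (a b : ℝ) :
    ∫ t in a..b, w t = prim w b - prim w a :=
  (intervalIntegral.integral_interval_sub_left (hw 0 b) (hw 0 a)).symm

theorem continuous_prim (hw : ∀ a b, IntervalIntegrable w volume a b) : Continuous (prim w) :=
  intervalIntegral.continuous_primitive hw 0

theorem monotone_prim (hw : ∀ a b, IntervalIntegrable w volume a b) (h : ∀ t, 0 ≤ w t) :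
    Monotone (prim w) := fun a b hab => by
  have := intervalIntegral.integral_nonneg (μ := volume) hab fun t _ => h t
  rw [integral_eq_prim_sub hw] at this
  linarith

theorem strictMono_prim (hw : ∀ a b, IntervalIntegrable w volume a b) (h : ∀ t, 0 < w t) :
    StrictMono (prim w) := fun a b hab => by
  have := intervalIntegral.intervalIntegral_pos_of_pos (hw a b) h hab
  rw [integral_eq_prim_sub hw] at this
  linarith

theorem prim_comp_neg (w : ℝ → ℝ) (x : ℝ) : prim (fun t => w (-t)) x = -prim w (-x) := by
  rw [prim, intervalIntegral.integral_comp_neg, neg_zero, intervalIntegral.integral_symm, prim]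

end Primitive

def centralDiff (P : ℝ → ℝ) (x e : ℝ) : ℝ := P (x + e) - P (x - e)

namespace StrictMono

variable {P d : ℝ → ℝ}

theorem crossesOneOnce_centralDiff (hP : StrictMono P) (x : ℝ) :
    CrossesOneOnce (centralDiff P x) :=
  StrictMono.crossesOneOnce fun e e' hee' => by
    have := hP (show x + e < x + e' by linarith)
    have := hP (show x - e' < x - e by linarith)
    simp only [centralDiff]
    linarith

theorem existsUnique_centralDiff_eq_one (hP : StrictMono P) (hc : Continuous P)
    (htop : Tendsto P atTop atTop) (x : ℝ) : ∃! e, 0 < e ∧ centralDiff P x e = 1 := by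
  refine (hP.crossesOneOnce_centralDiff x).existsUnique (by unfold centralDiff; fun_prop)
    (by simp [centralDiff]) (tendsto_atTop_mono' _ ?_ (tendsto_atTop_add_const_right _ (-P x)
      (htop.comp (tendsto_atTop_add_const_left _ x tendsto_id))))
  filter_upwards [eventually_ge_atTop 0] with e he
  have := hP.monotone (show x - e ≤ x by linarith)
  simp only [centralDiff, Function.comp_apply, id]
  linarith

theorem continuous_of_centralDiff_eq_one (hP : StrictMono P) (hc : Continuous P)
    (hd : ∀ x, 0 < d x ∧ centralDiff P x (d x) = 1) : Continuous d :=
  continuous_of_crossesOneOnce (fun e => by unfold centralDiff; fun_prop)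
    hP.crossesOneOnce_centralDiff hd

theorem tendsto_add_atBot_of_centralDiff_eq_one (hP : StrictMono P)
    (hbot : Tendsto P atBot atBot) (hd : ∀ x, 0 < d x ∧ centralDiff P x (d x) = 1) :
    Tendsto (fun x => x + d x) atBot atBot := by
  refine Filter.tendsto_atBot.2 fun b => ?_
  filter_upwards [hbot.eventually_le_atBot (P b - 1)] with x hx
  have := hP.monotone (show x - d x ≤ x by linarith [(hd x).1])
  have := (hd x).2
  unfold centralDiff at this
  exact hP.le_iff_le.1 (by linarith)

theorem tendsto_sub_atTop_of_centralDiff_eq_one (hP : StrictMono P)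
    (htop : Tendsto P atTop atTop) (hd : ∀ x, 0 < d x ∧ centralDiff P x (d x) = 1) :
    Tendsto (fun x => x - d x) atTop atTop := by
  refine Filter.tendsto_atTop.2 fun b => ?_
  filter_upwards [htop.eventually_ge_atTop (P b + 1)] with x hx
  have := hP.monotone (show x ≤ x + d x by linarith [(hd x).1])
  have := (hd x).2
  unfold centralDiff at this
  exact hP.le_iff_le.1 (by linarith)

end StrictMono

theorem one_lt_mul_sub_of_lt {R Q : ℝ → ℝ} (hR : StrictMono R) (hQ : Monotone Q)
    {a b a' b' : ℝ} (hab : a ≤ b) (ha : a' ≤ a) (hb : b ≤ b') (hlt : a' < a ∨ b < b')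
    (h1 : 1 ≤ (R b - R a) * (Q b - Q a)) : 1 < (R b' - R a') * (Q b' - Q a') := by
  have hRab : 0 ≤ R b - R a := sub_nonneg.2 (hR.monotone hab)
  have hR' : R b - R a < R b' - R a' := by
    rcases hlt with h | h
    · linarith [hR h, hR.monotone hb]
    · linarith [hR h, hR.monotone ha]
  have hQ' : Q b - Q a ≤ Q b' - Q a' := by linarith [hQ ha, hQ hb]
  have hQab : 0 < Q b - Q a := by
    rcases (sub_nonneg.2 (hQ hab)).eq_or_lt with h | h
    · rw [← h, mul_zero] at h1; linarith
    · exact h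
  calc 1 ≤ (R b - R a) * (Q b - Q a) := h1
    _ < (R b' - R a') * (Q b - Q a) := mul_lt_mul_of_pos_right hR' hQab
    _ ≤ (R b' - R a') * (Q b' - Q a') := mul_le_mul_of_nonneg_left hQ' (hRab.trans hR'.le)

theorem mul_div_add_le_left {a b : ℝ} (ha : 0 < a) (hb : 0 < b) : a * b / (a + b) ≤ a := by
  rw [div_le_iff₀ (by positivity)]
  nlinarith

theorem intervalIntegrable_inv_mul {r h : ℝ → ℝ}
    (hri : ∀ a b, IntervalIntegrable (fun t => (r t)⁻¹) volume a b) (hc : Continuous h)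
    (hne : ∀ t, h t ≠ 0) (a b : ℝ) : IntervalIntegrable (fun t => (r t * h t)⁻¹) volume a b := by
  simpa only [mul_inv, Pi.inv_apply] using (hri a b).mul_continuousOn (hc.inv₀ hne).continuousOn

theorem half_le_prim_sub {r h : ℝ → ℝ} (hr : ∀ t, 0 < r t)
    (hri : ∀ a b, IntervalIntegrable (fun t => (r t)⁻¹) volume a b)
    (hWi : ∀ a b, IntervalIntegrable (fun t => (r t * h t)⁻¹) volume a b) (hpos : ∀ t, 0 < h t)
    {y z K : ℝ} (hyz : y ≤ z) (hK : ∀ t ∈ Icc y z, h t ≤ K)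
    (hgap : prim (fun t => (r t)⁻¹) z - prim (fun t => (r t)⁻¹) y = K / 2) :
    prim (fun t => (r t * h t)⁻¹) y + 1 / 2 ≤ prim (fun t => (r t * h t)⁻¹) z := by
  have hK0 : 0 < K := (hpos y).trans_le (hK y ⟨le_rfl, hyz⟩)
  have hmono : ∫ t in y..z, (r t)⁻¹ / K ≤ ∫ t in y..z, (r t * h t)⁻¹ :=
    intervalIntegral.integral_mono_on hyz ((hri y z).div_const K) (hWi y z) fun t ht => by
      rw [mul_inv, ← div_eq_mul_inv]
      exact div_le_div_of_nonneg_left (inv_pos.2 (hr t)).le (hpos t) (hK t ht)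
  rw [intervalIntegral.integral_div, integral_eq_prim_sub hri, integral_eq_prim_sub hWi, hgap]
    at hmono
  have : K / 2 / K = 1 / 2 := by field_simp
  linarith

theorem not_bddAbove_image_of_forall_exists_add_le {α : Type*} {f : α → ℝ} {s : Set α} {c : ℝ}
    (hc : 0 < c) (hs : s.Nonempty) (hstep : ∀ y ∈ s, ∃ z ∈ s, f y + c ≤ f z) :
    ¬BddAbove (f '' s) := by
  rintro ⟨B, hB⟩
  obtain ⟨y₀, hy₀⟩ := hs
  have key : ∀ n : ℕ, ∃ y ∈ s, f y₀ + n * c ≤ f y := by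
    intro n
    induction n with
    | zero => exact ⟨y₀, hy₀, by simp⟩
    | succ n ih =>
      obtain ⟨y, hy, hfy⟩ := ih
      obtain ⟨z, hz, hfz⟩ := hstep y hy
      exact ⟨z, hz, by push_cast; linarith⟩
  obtain ⟨n, hn⟩ := exists_nat_gt ((B - f y₀) / c)
  obtain ⟨y, hy, hfy⟩ := key n
  have := hB (mem_image_of_mem f hy)
  rw [div_lt_iff₀ hc] at hn
  linarith

theorem tendsto_prim_inv_mul_atTop {r h α β : ℝ → ℝ} (hr : ∀ t, 0 < r t)
    (hri : ∀ a b, IntervalIntegrable (fun t => (r t)⁻¹) volume a b) (hc : Continuous h)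
    (hpos : ∀ t, 0 < h t) (hα : Monotone α)
    (hφ : ∀ t, h t ≤ prim (fun t => (r t)⁻¹) t - prim (fun t => (r t)⁻¹) (α t))
    (hψ : ∀ t, h t ≤ prim (fun t => (r t)⁻¹) (β t) - prim (fun t => (r t)⁻¹) t) :
    Tendsto (prim fun t => (r t * h t)⁻¹) atTop atTop := by
  set R := prim fun t => (r t)⁻¹
  have hR : StrictMono R := strictMono_prim hri fun t => inv_pos.2 (hr t)
  have hRc : Continuous R := continuous_prim hri
  have hWi := intervalIntegrable_inv_mul hri hc fun t => (hpos t).ne'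
  refine tendsto_atTop_atTop_of_monotone'
    (strictMono_prim hWi fun t => inv_pos.2 (mul_pos (hr t) (hpos t))).monotone fun hbdd =>
      not_bddAbove_image_of_forall_exists_add_le one_half_pos ⟨0, le_refl (0 : ℝ)⟩ ?_
        (hbdd.mono (image_subset_range _ (Ici 0)))
  intro y (hy : 0 ≤ y)
  by_cases hRb : BddAbove (range R)
  · -- `h ≤ ψ ≤ sup R - R`: halve the remaining gap `sup R - R y`
    set L := sSup (range R)
    have hRL : ∀ t, R t < L := fun t => (hR (lt_add_one t)).trans_le (le_csSup hRb ⟨t + 1, rfl⟩)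
    obtain ⟨_, ⟨z₀, rfl⟩, hz₀⟩ :=
      exists_lt_of_lt_csSup (range_nonempty R) (show (R y + L) / 2 < L by linarith [hRL y])
    obtain ⟨z, hz, hRz⟩ := intermediate_value_Icc
      (hR.le_iff_le.1 (by linarith [hRL y] : R y ≤ R z₀)) hRc.continuousOn
      (show (R y + L) / 2 ∈ Icc (R y) (R z₀) from ⟨by linarith [hRL y], hz₀.le⟩)
    refine ⟨z, hy.trans hz.1, half_le_prim_sub hr hri hWi hpos hz.1 (K := L - R y)
      (fun t ht => ?_) (by show R z - R y = _; rw [hRz]; ring)⟩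
    linarith [hψ t, hRL (β t), hR.monotone ht.1]
  · -- `h ≤ φ ≤ R - R (α 0)` on `[0, ∞)`: double the gap `R y - R (α 0)`
    set c := R (α 0)
    have hcy : c < R y := by linarith [hφ 0, hpos 0, hR.monotone hy]
    obtain ⟨_, ⟨z₀, rfl⟩, hz₀⟩ := not_bddAbove_iff.1 hRb (2 * R y - c)
    obtain ⟨z, hz, hRz⟩ := intermediate_value_Icc
      (hR.le_iff_le.1 (by linarith : R y ≤ R z₀)) hRc.continuousOn
      (show 2 * R y - c ∈ Icc (R y) (R z₀) from ⟨by linarith, hz₀.le⟩)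
    refine ⟨z, hy.trans hz.1, half_le_prim_sub hr hri hWi hpos hz.1 (K := 2 * (R y - c))
      (fun t ht => ?_) (by show R z - R y = _; rw [hRz]; ring)⟩
    linarith [hφ t, hR.monotone (hα (hy.trans ht.1)), hR.monotone ht.2]

theorem tendsto_prim_inv_mul_atBot {r h α β : ℝ → ℝ} (hr : ∀ t, 0 < r t)
    (hri : ∀ a b, IntervalIntegrable (fun t => (r t)⁻¹) volume a b) (hc : Continuous h)
    (hpos : ∀ t, 0 < h t) (hβ : Monotone β)
    (hφ : ∀ t, h t ≤ prim (fun t => (r t)⁻¹) t - prim (fun t => (r t)⁻¹) (α t))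
    (hψ : ∀ t, h t ≤ prim (fun t => (r t)⁻¹) (β t) - prim (fun t => (r t)⁻¹) t) :
    Tendsto (prim fun t => (r t * h t)⁻¹) atBot atBot := by
  -- reflect through `t ↦ -t`, which exchanges the roles of `α` and `β`
  have hRneg : ∀ x, prim (fun t => (r (-t))⁻¹) x = -prim (fun t => (r t)⁻¹) (-x) :=
    prim_comp_neg fun t => (r t)⁻¹
  have key := tendsto_prim_inv_mul_atTop (r := fun t => r (-t)) (h := fun t => h (-t))
    (α := fun t => -β (-t)) (β := fun t => -α (-t)) (fun t => hr (-t))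
    (fun a b => by simpa only [neg_neg] using (IntervalIntegrable.iff_comp_neg (by simp)).1 (hri (-a) (-b)))
    (hc.comp continuous_neg) (fun t => hpos (-t)) (fun s t hst => neg_le_neg (hβ (neg_le_neg hst)))
    (fun t => by simp only [hRneg, neg_neg]; linarith [hψ (-t)])
    (fun t => by simp only [hRneg, neg_neg]; linarith [hφ (-t)])
  have hWneg : (prim fun t => (r t * h t)⁻¹) = fun x => -prim (fun t => (r (-t) * h (-t))⁻¹) (-x) := by
    funext x
    rw [prim_comp_neg (fun t => (r t * h t)⁻¹), neg_neg, neg_neg]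
  rw [hWneg]
  exact tendsto_neg_atTop_atBot.comp (key.comp tendsto_neg_atBot_atTop)

theorem Cond16.tendsto_F1 {r q : ℝ → ℝ} (h : Cond16 r q) (x : ℝ) :
    Tendsto (F1 r q x) atTop atTop := by
  refine ((h x).mono_left le_sup_left).congr' ?_
  filter_upwards [eventually_ge_atTop 0] with d hd
  have hle : x - d ≤ x := by linarith
  rw [F1, intervalIntegral.integral_of_le hle, intervalIntegral.integral_of_le hle, uIoc_of_le hle]

theorem Cond16.tendsto_F2 {r q : ℝ → ℝ} (h : Cond16 r q) (x : ℝ) :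
    Tendsto (F2 r q x) atTop atTop := by
  refine (((h x).mono_left le_sup_right).comp tendsto_neg_atTop_atBot).congr' ?_
  filter_upwards [eventually_ge_atTop 0] with d hd
  have hle : x ≤ x + d := by linarith
  rw [Function.comp_apply, sub_neg_eq_add, uIoc_comm, uIoc_of_le hle, F2,
    intervalIntegral.integral_of_le hle, intervalIntegral.integral_of_le hle]

namespace Cond12

variable {r q d1 d2 : ℝ → ℝ}

theorem intervalIntegrable_inv (h : Cond12 r q) (a b : ℝ) :
    IntervalIntegrable (fun t => (r t)⁻¹) volume a b :=
  (h.2.2.1.integrableOn_isCompact isCompact_uIcc).intervalIntegrable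

theorem intervalIntegrable (h : Cond12 r q) (a b : ℝ) : IntervalIntegrable q volume a b :=
  (h.2.2.2.integrableOn_isCompact isCompact_uIcc).intervalIntegrable

theorem strictMono_prim_inv (h : Cond12 r q) : StrictMono (prim fun t => (r t)⁻¹) :=
  strictMono_prim h.intervalIntegrable_inv fun t => inv_pos.2 (h.1 t)

theorem F1_eq (h : Cond12 r q) (x d : ℝ) :
    F1 r q x d = (prim (fun t => (r t)⁻¹) x - prim (fun t => (r t)⁻¹) (x - d)) *
      (prim q x - prim q (x - d)) := by
  rw [F1, integral_eq_prim_sub h.intervalIntegrable_inv, integral_eq_prim_sub h.intervalIntegrable]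

theorem F2_eq (h : Cond12 r q) (x d : ℝ) :
    F2 r q x d = (prim (fun t => (r t)⁻¹) (x + d) - prim (fun t => (r t)⁻¹) x) *
      (prim q (x + d) - prim q x) := by
  rw [F2, integral_eq_prim_sub h.intervalIntegrable_inv, integral_eq_prim_sub h.intervalIntegrable]

theorem continuous_F1 (h : Cond12 r q) : Continuous (Function.uncurry (F1 r q)) := by
  have := continuous_prim h.intervalIntegrable_inv
  have := continuous_prim h.intervalIntegrable
  simp only [Function.uncurry_def, h.F1_eq]
  fun_prop

theorem continuous_F2 (h : Cond12 r q) : Continuous (Function.uncurry (F2 r q)) := by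
  have := continuous_prim h.intervalIntegrable_inv
  have := continuous_prim h.intervalIntegrable
  simp only [Function.uncurry_def, h.F2_eq]
  fun_prop

theorem crossesOneOnce_F1 (h : Cond12 r q) (x : ℝ) : CrossesOneOnce (F1 r q x) :=
  fun a b _ hab h1 => by
    rw [h.F1_eq] at h1 ⊢
    exact one_lt_mul_sub_of_lt h.strictMono_prim_inv (monotone_prim h.intervalIntegrable h.2.1)
      (by linarith) (by linarith) le_rfl (.inl (by linarith)) h1

theorem crossesOneOnce_F2 (h : Cond12 r q) (x : ℝ) : CrossesOneOnce (F2 r q x) :=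
  fun a b _ hab h1 => by
    rw [h.F2_eq] at h1 ⊢
    exact one_lt_mul_sub_of_lt h.strictMono_prim_inv (monotone_prim h.intervalIntegrable h.2.1)
      (by linarith) le_rfl (by linarith) (.inr (by linarith)) h1

theorem monotone_sub_of_isD1 (h : Cond12 r q) (hd1 : IsD1 r q d1) :
    Monotone fun x => x - d1 x := fun x y hxy => by
  by_contra! hlt
  have h1 := (hd1 x).2
  have h2 := (hd1 y).2
  rw [h.F1_eq] at h1 h2
  exact (one_lt_mul_sub_of_lt h.strictMono_prim_inv (monotone_prim h.intervalIntegrable h.2.1)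
    (by linarith [(hd1 x).1]) hlt.le hxy (.inl hlt) h1.ge).ne' h2

theorem monotone_add_of_isD2 (h : Cond12 r q) (hd2 : IsD2 r q d2) :
    Monotone fun x => x + d2 x := fun x y hxy => by
  by_contra! hlt
  have h1 := (hd2 x).2
  have h2 := (hd2 y).2
  rw [h.F2_eq] at h1 h2
  exact (one_lt_mul_sub_of_lt h.strictMono_prim_inv (monotone_prim h.intervalIntegrable h.2.1)
    (by linarith [(hd2 y).1]) hxy hlt.le (.inr hlt) h2.ge).ne' h1

theorem continuous_of_isD1 (h : Cond12 r q) (hd1 : IsD1 r q d1) : Continuous d1 :=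
  continuous_of_crossesOneOnce (fun e => h.continuous_F1.uncurry_right e) h.crossesOneOnce_F1 hd1

theorem continuous_of_isD2 (h : Cond12 r q) (hd2 : IsD2 r q d2) : Continuous d2 :=
  continuous_of_crossesOneOnce (fun e => h.continuous_F2.uncurry_right e) h.crossesOneOnce_F2 hd2

theorem phiF_eq (h : Cond12 r q) (x : ℝ) :
    phiF r d1 x = prim (fun t => (r t)⁻¹) x - prim (fun t => (r t)⁻¹) (x - d1 x) :=
  integral_eq_prim_sub h.intervalIntegrable_inv _ _

theorem psiF_eq (h : Cond12 r q) (x : ℝ) :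
    psiF r d2 x = prim (fun t => (r t)⁻¹) (x + d2 x) - prim (fun t => (r t)⁻¹) x :=
  integral_eq_prim_sub h.intervalIntegrable_inv _ _

theorem phiF_pos (h : Cond12 r q) (hd1 : IsD1 r q d1) (x : ℝ) : 0 < phiF r d1 x := by
  rw [h.phiF_eq]
  exact sub_pos.2 (h.strictMono_prim_inv (by linarith [(hd1 x).1]))

theorem psiF_pos (h : Cond12 r q) (hd2 : IsD2 r q d2) (x : ℝ) : 0 < psiF r d2 x := by
  rw [h.psiF_eq]
  exact sub_pos.2 (h.strictMono_prim_inv (by linarith [(hd2 x).1]))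

theorem hF_pos (h : Cond12 r q) (hd1 : IsD1 r q d1) (hd2 : IsD2 r q d2) (x : ℝ) :
    0 < hF r d1 d2 x := by
  have := h.phiF_pos hd1 x
  have := h.psiF_pos hd2 x
  unfold hF
  positivity

theorem hF_le_phiF (h : Cond12 r q) (hd1 : IsD1 r q d1) (hd2 : IsD2 r q d2) (x : ℝ) :
    hF r d1 d2 x ≤ phiF r d1 x :=
  mul_div_add_le_left (h.phiF_pos hd1 x) (h.psiF_pos hd2 x)

theorem hF_le_psiF (h : Cond12 r q) (hd1 : IsD1 r q d1) (hd2 : IsD2 r q d2) (x : ℝ) :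
    hF r d1 d2 x ≤ psiF r d2 x := by
  rw [hF, mul_comm, add_comm]
  exact mul_div_add_le_left (h.psiF_pos hd2 x) (h.phiF_pos hd1 x)

theorem continuous_hF (h : Cond12 r q) (hd1 : IsD1 r q d1) (hd2 : IsD2 r q d2) :
    Continuous (hF r d1 d2) := by
  have := continuous_prim h.intervalIntegrable_inv
  have := h.continuous_of_isD1 hd1
  have := h.continuous_of_isD2 hd2
  have hφ : Continuous (phiF r d1) := by rw [funext h.phiF_eq]; fun_prop
  have hψ : Continuous (psiF r d2) := by rw [funext h.psiF_eq]; fun_prop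
  exact (hφ.mul hψ).div (hφ.add hψ) fun x => (add_pos (h.phiF_pos hd1 x) (h.psiF_pos hd2 x)).ne'

theorem tendsto_prim_atTop (h : Cond12 r q) (hd1 : IsD1 r q d1) (hd2 : IsD2 r q d2) :
    Tendsto (prim fun t => (r t * hF r d1 d2 t)⁻¹) atTop atTop :=
  tendsto_prim_inv_mul_atTop h.1 h.intervalIntegrable_inv (h.continuous_hF hd1 hd2)
    (h.hF_pos hd1 hd2) (h.monotone_sub_of_isD1 hd1)
    (fun t => (h.hF_le_phiF hd1 hd2 t).trans_eq (h.phiF_eq t))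
    (fun t => (h.hF_le_psiF hd1 hd2 t).trans_eq (h.psiF_eq t))

theorem tendsto_prim_atBot (h : Cond12 r q) (hd1 : IsD1 r q d1) (hd2 : IsD2 r q d2) :
    Tendsto (prim fun t => (r t * hF r d1 d2 t)⁻¹) atBot atBot :=
  tendsto_prim_inv_mul_atBot h.1 h.intervalIntegrable_inv (h.continuous_hF hd1 hd2)
    (h.hF_pos hd1 hd2) (h.monotone_add_of_isD2 hd2)
    (fun t => (h.hF_le_phiF hd1 hd2 t).trans_eq (h.phiF_eq t))
    (fun t => (h.hF_le_psiF hd1 hd2 t).trans_eq (h.psiF_eq t))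

end Cond12

/-- Lemma 1.6: under (1.2) and (1.6), the equations (1.15) have unique
positive solutions `d₁(x)`, `d₂(x)`; with `φ, ψ, h` built from them, equation (1.18) has
a unique positive solution `d(x)`; `d` is continuous, and `x + d(x) → -∞` as `x → -∞`,
`x - d(x) → +∞` as `x → +∞`. -/
theorem stmt_4 (r q : ℝ → ℝ) (h12 : Cond12 r q) (h16 : Cond16 r q) :
    (∀ x : ℝ, (∃! d : ℝ, 0 < d ∧ F1 r q x d = 1) ∧ (∃! d : ℝ, 0 < d ∧ F2 r q x d = 1)) ∧
    ∀ d1 d2 : ℝ → ℝ, IsD1 r q d1 → IsD2 r q d2 →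
      (∀ x : ℝ, ∃! d : ℝ, 0 < d ∧ (∫ t in (x - d)..(x + d), (r t * hF r d1 d2 t)⁻¹) = 1) ∧
      ∀ d : ℝ → ℝ, IsD r (hF r d1 d2) d →
        Continuous d ∧ Tendsto (fun x => x + d x) atBot atBot ∧
          Tendsto (fun x => x - d x) atTop atTop := by
  refine ⟨fun x => ⟨?_, ?_⟩, fun d1 d2 hd1 hd2 => ?_⟩
  · exact (h12.crossesOneOnce_F1 x).existsUnique (h12.continuous_F1.uncurry_left x)
      (by simp [F1]) (h16.tendsto_F1 x)
  · exact (h12.crossesOneOnce_F2 x).existsUnique (h12.continuous_F2.uncurry_left x)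
      (by simp [F2]) (h16.tendsto_F2 x)
  set P := prim fun t => (r t * hF r d1 d2 t)⁻¹
  have hWi := intervalIntegrable_inv_mul h12.intervalIntegrable_inv (h12.continuous_hF hd1 hd2)
    fun t => (h12.hF_pos hd1 hd2 t).ne'
  have hP : StrictMono P :=
    strictMono_prim hWi fun t => inv_pos.2 (mul_pos (h12.1 t) (h12.hF_pos hd1 hd2 t))
  have hint (x e : ℝ) :
      ∫ t in (x - e)..(x + e), (r t * hF r d1 d2 t)⁻¹ = centralDiff P x e :=
    integral_eq_prim_sub hWi _ _
  refine ⟨fun x => ?_, fun d hd => ?_⟩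
  · simpa only [hint] using
      hP.existsUnique_centralDiff_eq_one (continuous_prim hWi) (h12.tendsto_prim_atTop hd1 hd2) x
  have hd' : ∀ x, 0 < d x ∧ centralDiff P x (d x) = 1 := fun x => by simpa only [hint] using hd x
  exact ⟨hP.continuous_of_centralDiff_eq_one (continuous_prim hWi) hd',
    hP.tendsto_add_atBot_of_centralDiff_eq_one (h12.tendsto_prim_atBot hd1 hd2) hd',
    hP.tendsto_sub_atTop_of_centralDiff_eq_one (h12.tendsto_prim_atTop hd1 hd2) hd'⟩

end
end

section
/- Under conditions (1.2) and (1.5), let ρ(x) = u(x)v(x) and let x₀ be the unique solution of u(x) = v(x) in ℝ. Then the Davies–Harrell representations hold: u(x) = √(ρ(x)) · exp(−(1/2)∫_{x₀}^x dt/(r(t)ρ(t))) and v(x) = √(ρ(x)) · exp((1/2)∫_{x₀}^x dt/(r(t)ρ(t))) for all x ∈ ℝ, and consequently the Green function satisfies G(x,t) = √(ρ(x)ρ(t)) · exp(−(1/2)|∫_t^x dξ/(r(ξ)ρ(ξ))|) for all x, t ∈ ℝ. -/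
open MeasureTheory Set Filter
open scoped ENNReal

noncomputable section

/-!
The Wronskian identity `r (v'u - u'v) = 1` says exactly that `1/(rρ) = v'/v - u'/u`. Since `u`
and `v` are positive and absolutely continuous, so are `log u` and `log v`, and the fundamental
theorem of calculus gives `∫_{x₀}^x dt/(rρ) = log (v/u) (x)`, the constant vanishing because
`u(x₀) = v(x₀)`. Both representations are then `u = √(uv) (v/u)^{-1/2}` and
`v = √(uv) (v/u)^{1/2}`, and the Green function formula follows because the integrand is
nonnegative (`v' ≥ 0 ≥ u'`), so that `x ↦ log (v/u) (x)` is monotone.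
-/

theorem LipschitzOnWith.comp_absolutelyContinuousOnInterval {X Y : Type*}
    [PseudoMetricSpace X] [PseudoMetricSpace Y] {φ : X → Y} {K : NNReal} {s : Set X}
    {f : ℝ → X} {a b : ℝ} (hφ : LipschitzOnWith K φ s)
    (hf : AbsolutelyContinuousOnInterval f a b) (hfs : MapsTo f (uIcc a b) s) :
    AbsolutelyContinuousOnInterval (φ ∘ f) a b := by
  rw [absolutelyContinuousOnInterval_iff] at hf ⊢
  intro ε hε
  obtain ⟨δ, hδ, hfδ⟩ := hf (ε / (K + 1)) (by positivity)
  refine ⟨δ, hδ, fun E hE hEδ => ?_⟩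
  calc ∑ i ∈ Finset.range E.1, dist (φ (f (E.2 i).1)) (φ (f (E.2 i).2))
      ≤ ∑ i ∈ Finset.range E.1, K * dist (f (E.2 i).1) (f (E.2 i).2) :=
        Finset.sum_le_sum fun i hi =>
          hφ.dist_le_mul _ (hfs (hE.1 i hi).1) _ (hfs (hE.1 i hi).2)
    _ = K * ∑ i ∈ Finset.range E.1, dist (f (E.2 i).1) (f (E.2 i).2) :=
        (Finset.mul_sum _ _ _).symm
    _ ≤ K * (ε / (K + 1)) := by gcongr; exact (hfδ E hE hEδ).le
    _ < ε := by
        rw [mul_div_assoc', div_lt_iff₀ (by positivity)]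
        nlinarith

theorem AbsolutelyContinuousOnInterval.log {f : ℝ → ℝ} {a b : ℝ}
    (hf : AbsolutelyContinuousOnInterval f a b) (hpos : ∀ x ∈ uIcc a b, 0 < f x) :
    AbsolutelyContinuousOnInterval (fun x => Real.log (f x)) a b := by
  obtain ⟨m, hm, hm_min⟩ := isCompact_uIcc.exists_isMinOn nonempty_uIcc hf.continuousOn
  obtain ⟨M, -, hM_max⟩ := isCompact_uIcc.exists_isMaxOn nonempty_uIcc hf.continuousOn
  have hmaps : MapsTo f (uIcc a b) (Icc (f m) (f M)) := fun x hx => ⟨hm_min hx, hM_max hx⟩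
  have hlog : ContDiffOn ℝ 1 Real.log (Icc (f m) (f M)) :=
    Real.contDiffOn_log.mono fun y hy => (lt_of_lt_of_le (hpos m hm) hy.1).ne'
  obtain ⟨K, hK⟩ := hlog.exists_lipschitzOnWith one_ne_zero (convex_Icc _ _) isCompact_Icc
  exact hK.comp_absolutelyContinuousOnInterval hf hmaps

theorem AbsolutelyContinuousOnInterval.integral_deriv_div_eq_log_sub {f : ℝ → ℝ} {a b : ℝ}
    (hf : AbsolutelyContinuousOnInterval f a b) (hpos : ∀ x ∈ uIcc a b, 0 < f x) :
    ∫ x in a..b, deriv f x / f x = Real.log (f b) - Real.log (f a) := by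
  rw [← (hf.log hpos).integral_deriv_eq_sub]
  refine intervalIntegral.integral_congr_ae ?_
  filter_upwards [hf.ae_differentiableAt] with x hdiff hx
  have hx' : x ∈ uIcc a b := uIoc_subset_uIcc hx
  exact (deriv.log (hdiff hx') (hpos x hx').ne').symm

theorem eq_add_integral_of_forall_eq_add_integral {f F : ℝ → ℝ}
    (hf : ∀ a b, IntervalIntegrable f volume a b)
    (hF : ∀ x, F x = F 0 + ∫ t in (0 : ℝ)..x, f t) (a x : ℝ) :
    F x = F a + ∫ t in a..x, f t := by
  rw [hF x, hF a, add_assoc, intervalIntegral.integral_add_adjacent_intervals (hf 0 a) (hf a x)]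

theorem absolutelyContinuousOnInterval_of_forall_eq_add_integral {f F : ℝ → ℝ}
    (hf : ∀ a b, IntervalIntegrable f volume a b)
    (hF : ∀ x, F x = F 0 + ∫ t in (0 : ℝ)..x, f t) (a b : ℝ) :
    AbsolutelyContinuousOnInterval F a b := by
  have hFa : F = (fun _ => F a) + fun x => ∫ t in a..x, f t :=
    funext (eq_add_integral_of_forall_eq_add_integral hf hF a)
  rw [hFa]
  exact (LipschitzWith.const (F a)).lipschitzOnWith.absolutelyContinuousOnInterval.add
    ((hf a b).absolutelyContinuousOnInterval_intervalIntegral left_mem_uIcc)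

theorem ae_deriv_eq_of_forall_eq_add_integral {f F : ℝ → ℝ}
    (hf : ∀ a b, IntervalIntegrable f volume a b)
    (hF : ∀ x, F x = F 0 + ∫ t in (0 : ℝ)..x, f t) (a b : ℝ) :
    ∀ᵐ x, x ∈ uIcc a b → deriv F x = f x := by
  have hFa : F = fun x => F a + ∫ t in a..x, f t :=
    funext (eq_add_integral_of_forall_eq_add_integral hf hF a)
  filter_upwards [(hf a b).ae_hasDerivAt_integral] with x hx hxab
  rw [hFa]
  exact ((hx hxab a left_mem_uIcc).const_add (F a)).deriv

theorem integral_div_eq_log_sub_of_forall_eq_add_integral {f F : ℝ → ℝ}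
    (hf : ∀ a b, IntervalIntegrable f volume a b)
    (hF : ∀ x, F x = F 0 + ∫ t in (0 : ℝ)..x, f t) (hpos : ∀ x, 0 < F x) (a b : ℝ) :
    ∫ t in a..b, f t / F t = Real.log (F b) - Real.log (F a) := by
  rw [← (absolutelyContinuousOnInterval_of_forall_eq_add_integral hf hF a b)
    |>.integral_deriv_div_eq_log_sub fun x _ => hpos x]
  refine intervalIntegral.integral_congr_ae ?_
  filter_upwards [ae_deriv_eq_of_forall_eq_add_integral hf hF a b] with x hx hxab
  rw [hx (uIoc_subset_uIcc hxab)]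

theorem exp_half_mul_log_eq_sqrt {x : ℝ} (hx : 0 < x) :
    Real.exp ((1 / 2) * Real.log x) = √x := by
  rw [Real.sqrt_eq_rpow, Real.rpow_def_of_pos hx, mul_comm]

theorem sqrt_mul_mul_exp_half_log_div {u v : ℝ} (hu : 0 < u) (hv : 0 < v) :
    √(u * v) * Real.exp ((1 / 2) * Real.log (v / u)) = v := by
  rw [exp_half_mul_log_eq_sqrt (div_pos hv hu), ← Real.sqrt_mul (mul_pos hu hv).le,
    show u * v * (v / u) = v * v by field_simp, Real.sqrt_mul_self hv.le]

theorem sqrt_mul_mul_exp_neg_half_log_div {u v : ℝ} (hu : 0 < u) (hv : 0 < v) :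
    √(u * v) * Real.exp (-(1 / 2) * Real.log (v / u)) = u := by
  rw [neg_mul, ← mul_neg, ← Real.log_inv, inv_div, mul_comm u v,
    sqrt_mul_mul_exp_half_log_div hv hu]

theorem inv_mul_mul_eq_div_sub_div {r u u' v v' : ℝ} (hu : u ≠ 0) (hv : v ≠ 0)
    (hW : r * (v' * u - u' * v) = 1) : (r * (u * v))⁻¹ = v' / v - u' / u := by
  rw [mul_inv, inv_eq_of_mul_eq_one_right hW]
  field_simp

theorem integral_inv_mul_mul_eq_log_div_sub {r u u' v v' : ℝ → ℝ}
    (hu' : ∀ a b, IntervalIntegrable u' volume a b)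
    (hu : ∀ x, u x = u 0 + ∫ t in (0 : ℝ)..x, u' t)
    (hv' : ∀ a b, IntervalIntegrable v' volume a b)
    (hv : ∀ x, v x = v 0 + ∫ t in (0 : ℝ)..x, v' t)
    (hupos : ∀ x, 0 < u x) (hvpos : ∀ x, 0 < v x)
    (hW : ∀ x, r x * (v' x * u x - u' x * v x) = 1) (a b : ℝ) :
    ∫ t in a..b, (r t * (u t * v t))⁻¹ = Real.log (v b / u b) - Real.log (v a / u a) := by
  have hint {w w' : ℝ → ℝ} (hw' : ∀ a b, IntervalIntegrable w' volume a b)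
      (hw : ∀ x, w x = w 0 + ∫ t in (0 : ℝ)..x, w' t) (hwpos : ∀ x, 0 < w x) :
      IntervalIntegrable (fun t => w' t / w t) volume a b := by
    have hw_inv : ContinuousOn (fun t => (w t)⁻¹) (uIcc a b) :=
      (absolutelyContinuousOnInterval_of_forall_eq_add_integral hw' hw a b).continuousOn.inv₀
        fun x _ => (hwpos x).ne'
    simpa only [div_eq_mul_inv] using (hw' a b).mul_continuousOn hw_inv
  rw [intervalIntegral.integral_congr fun t _ =>
      inv_mul_mul_eq_div_sub_div (hupos t).ne' (hvpos t).ne' (hW t),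
    intervalIntegral.integral_sub (hint hv' hv hvpos) (hint hu' hu hupos),
    integral_div_eq_log_sub_of_forall_eq_add_integral hv' hv hvpos,
    integral_div_eq_log_sub_of_forall_eq_add_integral hu' hu hupos,
    Real.log_div (hvpos b).ne' (hupos b).ne', Real.log_div (hvpos a).ne' (hupos a).ne']
  ring

theorem greenK_eq_mul_exp_abs_sub {u v s I : ℝ → ℝ} (hI : Monotone I)
    (hu : ∀ x, u x = s x * Real.exp (-(1 / 2) * I x))
    (hv : ∀ x, v x = s x * Real.exp ((1 / 2) * I x)) (x t : ℝ) :
    greenK u v x t = s x * s t * Real.exp (-(1 / 2) * |I x - I t|) := by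
  unfold greenK
  split_ifs with htx
  · rw [abs_of_nonneg (sub_nonneg.mpr (hI htx)), hu x, hv t, mul_mul_mul_comm,
      ← Real.exp_add]
    ring_nf
  · rw [abs_of_nonpos (sub_nonpos.mpr (hI (not_le.mp htx).le)), hu t, hv x, mul_mul_mul_comm,
      ← Real.exp_add]
    ring_nf

theorem stmt_9_general (r q u u' v v' : ℝ → ℝ)
    (hFSS : IsFSS r q u u' v v') (x₀ : ℝ) (hx₀ : u x₀ = v x₀) :
    (∀ x : ℝ, u x = Real.sqrt (u x * v x) *
        Real.exp (-(1 / 2) * ∫ t in x₀..x, (r t * (u t * v t))⁻¹)) ∧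
    (∀ x : ℝ, v x = Real.sqrt (u x * v x) *
        Real.exp ((1 / 2) * ∫ t in x₀..x, (r t * (u t * v t))⁻¹)) ∧
    (∀ x t : ℝ, greenK u v x t = Real.sqrt ((u x * v x) * (u t * v t)) *
        Real.exp (-(1 / 2) * |∫ ξ in t..x, (r ξ * (u ξ * v ξ))⁻¹|)) := by
  obtain ⟨⟨hu', hu, -⟩, ⟨hv', hv, -⟩, hupos, hvpos, hv'_nonneg, hu'_nonpos, hW, -⟩ :=
    hFSS
  set L : ℝ → ℝ := fun x => Real.log (v x / u x)
  have hL : ∀ a b, ∫ t in a..b, (r t * (u t * v t))⁻¹ = L b - L a :=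
    integral_inv_mul_mul_eq_log_div_sub hu' hu hv' hv hupos hvpos hW
  have hLx₀ : L x₀ = 0 := by simp [L, hx₀, (hvpos x₀).ne']
  have hL_mono : Monotone L := fun a b hab => by
    rw [← sub_nonneg, ← hL]
    refine intervalIntegral.integral_nonneg hab fun t _ => ?_
    rw [inv_mul_mul_eq_div_sub_div (hupos t).ne' (hvpos t).ne' (hW t)]
    have := div_nonneg (hv'_nonneg t) (hvpos t).le
    have := div_nonpos_of_nonpos_of_nonneg (hu'_nonpos t) (hupos t).le
    linarith
  have hu_rep : ∀ x, u x = √(u x * v x) * Real.exp (-(1 / 2) * L x) := fun x =>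
    (sqrt_mul_mul_exp_neg_half_log_div (hupos x) (hvpos x)).symm
  have hv_rep : ∀ x, v x = √(u x * v x) * Real.exp ((1 / 2) * L x) := fun x =>
    (sqrt_mul_mul_exp_half_log_div (hupos x) (hvpos x)).symm
  refine ⟨fun x => ?_, fun x => ?_, fun x t => ?_⟩
  · rw [hL, hLx₀, sub_zero]; exact hu_rep x
  · rw [hL, hLx₀, sub_zero]; exact hv_rep x
  · rw [hL, Real.sqrt_mul (mul_pos (hupos x) (hvpos x)).le]
    exact greenK_eq_mul_exp_abs_sub hL_mono hu_rep hv_rep x t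

/-- Theorem 2.1, Davies-Harrell representations: with `ρ = u·v` and `x₀`
the unique solution of `u(x) = v(x)`,
`u(x) = √ρ(x) exp(-(1/2)∫_{x₀}^x dt/(rρ))`, `v(x) = √ρ(x) exp((1/2)∫_{x₀}^x dt/(rρ))`,
and `G(x,t) = √(ρ(x)ρ(t)) exp(-(1/2)|∫_t^x dξ/(rρ)|)`. -/
theorem stmt_9 (r q u u' v v' : ℝ → ℝ) (h12 : Cond12 r q) (h15 : Cond15 q)
    (hFSS : IsFSS r q u u' v v') (x₀ : ℝ) (hx₀ : u x₀ = v x₀)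
    (hx₀u : ∀ x : ℝ, u x = v x → x = x₀) :
    (∀ x : ℝ, u x = Real.sqrt (u x * v x) *
        Real.exp (-(1 / 2) * ∫ t in x₀..x, (r t * (u t * v t))⁻¹)) ∧
    (∀ x : ℝ, v x = Real.sqrt (u x * v x) *
        Real.exp ((1 / 2) * ∫ t in x₀..x, (r t * (u t * v t))⁻¹)) ∧
    (∀ x t : ℝ, greenK u v x t = Real.sqrt ((u x * v x) * (u t * v t)) *
        Real.exp (-(1 / 2) * |∫ ξ in t..x, (r ξ * (u ξ * v ξ))⁻¹|)) :=
  stmt_9_general r q u u' v v' hFSS x₀ hx₀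
end
end

section
/- Suppose conditions (1.2) and (1.6) hold. Then for all x ∈ ℝ the following two-sided estimates hold: 2⁻¹v(x) ≤ r(x)v'(x)φ(x) ≤ 2v(x) and 2⁻¹u(x) ≤ r(x)|u'(x)|ψ(x) ≤ 2u(x). -/
open MeasureTheory Set Filter
open scoped ENNReal

noncomputable section

/-!
The flux `W = r v'` is nondecreasing since `(r v')' = q v ≥ 0`, and `v' = W / r`. Write
`a = x - d₁(x)` and `Q = ∫ₐˣ q`, so that `φ(x) Q = 1`. Comparing `W` and `v` with their values
at the endpoints of `[a, x]` gives `W(a) φ ≤ v(x) - v(a) ≤ W(x) φ` and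
`v(a) Q ≤ W(x) - W(a) ≤ v(x) Q`. As `v(a), W(a) ≥ 0`, these four bounds force
`v(x)/2 ≤ W(x) φ(x) ≤ 2 v(x)`. The estimate for `u` is the mirror image on `[x, x + d₂(x)]`,
with the nonincreasing `u` and the nonnegative, nonincreasing flux `-r u'`.
-/

/-- `Yn, Wn` are the values at the near endpoint, `Yf, Wf` those at the far endpoint. -/
lemma half_le_mul_le_two_mul_of_increment_bounds {Yn Yf Wn Wf φ Q : ℝ} (hYf : 0 ≤ Yf)
    (hWf : 0 ≤ Wf) (hφ : 0 ≤ φ) (hφQ : φ * Q = 1)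
    (hY_lo : Wf * φ ≤ Yn - Yf) (hY_hi : Yn - Yf ≤ Wn * φ)
    (hW_lo : Yf * Q ≤ Wn - Wf) (hW_hi : Wn - Wf ≤ Yn * Q) :
    2⁻¹ * Yn ≤ Wn * φ ∧ Wn * φ ≤ 2 * Yn := by
  have hYf_eq : Yf * Q * φ = Yf := by rw [mul_assoc, mul_comm Q, hφQ, mul_one]
  have hYn_eq : Yn * Q * φ = Yn := by rw [mul_assoc, mul_comm Q, hφQ, mul_one]
  have hW_lo' := mul_le_mul_of_nonneg_right hW_lo hφ
  have hW_hi' := mul_le_mul_of_nonneg_right hW_hi hφ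
  constructor <;> nlinarith [mul_nonneg hWf hφ]

lemma integral_bounds_of_forall_mul_le {a b m M : ℝ} {F g : ℝ → ℝ} (hab : a ≤ b)
    (hF : IntervalIntegrable F volume a b) (hg : IntervalIntegrable g volume a b)
    (h_lo : ∀ t ∈ Icc a b, m * g t ≤ F t) (h_hi : ∀ t ∈ Icc a b, F t ≤ M * g t) :
    m * ∫ t in a..b, g t ≤ ∫ t in a..b, F t ∧ ∫ t in a..b, F t ≤ M * ∫ t in a..b, g t := by
  rw [← intervalIntegral.integral_const_mul, ← intervalIntegral.integral_const_mul]
  exact ⟨intervalIntegral.integral_mono_on hab (hg.const_mul m) hF h_lo,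
    intervalIntegral.integral_mono_on hab hF (hg.const_mul M) h_hi⟩

namespace IsSolutionHom

variable {r q y y' : ℝ → ℝ}

lemma sub_eq_integral (hy : IsSolutionHom r q y y') (a b : ℝ) :
    y b - y a = ∫ t in a..b, y' t := by
  obtain ⟨hy'_int, hy_eq, -, -⟩ := hy
  rw [hy_eq a, hy_eq b, ← intervalIntegral.integral_add_adjacent_intervals (hy'_int 0 a)
    (hy'_int a b)]
  ring

lemma flux_sub_eq_integral (hy : IsSolutionHom r q y y') (a b : ℝ) :
    r b * y' b - r a * y' a = ∫ t in a..b, q t * y t := by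
  obtain ⟨-, -, hqy_int, hflux_eq⟩ := hy
  simp only [sub_zero] at hqy_int hflux_eq
  rw [hflux_eq a, hflux_eq b, ← intervalIntegral.integral_add_adjacent_intervals (hqy_int 0 a)
    (hqy_int a b)]
  ring

lemma monotone (hy : IsSolutionHom r q y y') (hy' : ∀ t, 0 ≤ y' t) : Monotone y := by
  intro a b hab
  have h_int : 0 ≤ ∫ t in a..b, y' t := intervalIntegral.integral_nonneg hab fun t _ => hy' t
  have := hy.sub_eq_integral a b
  linarith

lemma antitone (hy : IsSolutionHom r q y y') (hy' : ∀ t, y' t ≤ 0) : Antitone y := by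
  intro a b hab
  have h_int : 0 ≤ ∫ t in a..b, -y' t :=
    intervalIntegral.integral_nonneg hab fun t _ => neg_nonneg.2 (hy' t)
  rw [intervalIntegral.integral_neg] at h_int
  have := hy.sub_eq_integral a b
  linarith

lemma monotone_flux (hy : IsSolutionHom r q y y') (hq : ∀ t, 0 ≤ q t)
    (hy_nonneg : ∀ t, 0 ≤ y t) :
    Monotone fun t => r t * y' t := by
  intro a b hab
  have h_int : 0 ≤ ∫ t in a..b, q t * y t :=
    intervalIntegral.integral_nonneg hab fun t _ => mul_nonneg (hq t) (hy_nonneg t)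
  have := hy.flux_sub_eq_integral a b
  dsimp only
  linarith

variable (hr : ∀ t, 0 < r t) (hq : ∀ t, 0 ≤ q t) (hy : IsSolutionHom r q y y')
  (hy_nonneg : ∀ t, 0 ≤ y t)
include hr hq hy hy_nonneg

lemma half_le_flux_mul_integral_inv_le_of_nonneg (hy' : ∀ t, 0 ≤ y' t) {a x : ℝ} (hax : a ≤ x)
    (hφQ : (∫ t in a..x, (r t)⁻¹) * (∫ t in a..x, q t) = 1) :
    2⁻¹ * y x ≤ r x * y' x * ∫ t in a..x, (r t)⁻¹ ∧
      r x * y' x * ∫ t in a..x, (r t)⁻¹ ≤ 2 * y x := by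
  -- Neither factor of `φ Q = 1` can be the junk value `0` of a non-integrable function.
  have hr_int := intervalIntegral.intervalIntegrable_of_integral_ne_zero
    (left_ne_zero_of_mul_eq_one hφQ)
  have hq_int := intervalIntegral.intervalIntegrable_of_integral_ne_zero
    (right_ne_zero_of_mul_eq_one hφQ)
  have hy_int : IntervalIntegrable y' volume a x := hy.1 a x
  have hqy_int : IntervalIntegrable (fun t => q t * y t) volume a x := by
    simpa only [sub_zero] using hy.2.2.1 a x
  have hflux := hy.monotone_flux hq hy_nonneg
  have hr_inv : ∀ t, 0 ≤ (r t)⁻¹ := fun t => (inv_pos.2 (hr t)).le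
  have hy_mono := hy.monotone hy'
  have hy'_eq : ∀ t, y' t = r t * y' t * (r t)⁻¹ := fun t => by field_simp [(hr t).ne']
  obtain ⟨hY_lo, hY_hi⟩ := integral_bounds_of_forall_mul_le hax hy_int hr_int
    (m := r a * y' a) (M := r x * y' x)
    (fun t ht => by rw [hy'_eq t]; exact mul_le_mul_of_nonneg_right (hflux ht.1) (hr_inv t))
    (fun t ht => by rw [hy'_eq t]; exact mul_le_mul_of_nonneg_right (hflux ht.2) (hr_inv t))
  obtain ⟨hW_lo, hW_hi⟩ := integral_bounds_of_forall_mul_le hax hqy_int hq_int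
    (m := y a) (M := y x)
    (fun t ht => by rw [mul_comm]; gcongr; exacts [hq t, hy_mono ht.1])
    (fun t ht => by rw [mul_comm (y x)]; gcongr; exacts [hq t, hy_mono ht.2])
  rw [← hy.sub_eq_integral] at hY_lo hY_hi
  rw [← hy.flux_sub_eq_integral] at hW_lo hW_hi
  exact half_le_mul_le_two_mul_of_increment_bounds (hy_nonneg a)
    (mul_nonneg (hr a).le (hy' a))
    (intervalIntegral.integral_nonneg hax fun t _ => hr_inv t) hφQ
    hY_lo hY_hi hW_lo hW_hi

lemma half_le_flux_mul_integral_inv_le_of_nonpos (hy' : ∀ t, y' t ≤ 0) {x b : ℝ} (hxb : x ≤ b)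
    (hψQ : (∫ t in x..b, (r t)⁻¹) * (∫ t in x..b, q t) = 1) :
    2⁻¹ * y x ≤ r x * |y' x| * ∫ t in x..b, (r t)⁻¹ ∧
      r x * |y' x| * ∫ t in x..b, (r t)⁻¹ ≤ 2 * y x := by
  have hr_int := intervalIntegral.intervalIntegrable_of_integral_ne_zero
    (left_ne_zero_of_mul_eq_one hψQ)
  have hq_int := intervalIntegral.intervalIntegrable_of_integral_ne_zero
    (right_ne_zero_of_mul_eq_one hψQ)
  have hy_int : IntervalIntegrable (fun t => -y' t) volume x b := (hy.1 x b).neg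
  have hqy_int : IntervalIntegrable (fun t => q t * y t) volume x b := by
    simpa only [sub_zero] using hy.2.2.1 x b
  have hflux := hy.monotone_flux hq hy_nonneg
  have hr_inv : ∀ t, 0 ≤ (r t)⁻¹ := fun t => (inv_pos.2 (hr t)).le
  have hy_anti := hy.antitone hy'
  have hy'_eq : ∀ t, -y' t = -(r t * y' t) * (r t)⁻¹ := fun t => by field_simp [(hr t).ne']
  obtain ⟨hY_lo, hY_hi⟩ := integral_bounds_of_forall_mul_le hxb hy_int hr_int
    (m := -(r b * y' b)) (M := -(r x * y' x))
    (fun t ht => by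
      rw [hy'_eq t]; exact mul_le_mul_of_nonneg_right (neg_le_neg (hflux ht.2)) (hr_inv t))
    (fun t ht => by
      rw [hy'_eq t]; exact mul_le_mul_of_nonneg_right (neg_le_neg (hflux ht.1)) (hr_inv t))
  obtain ⟨hW_lo, hW_hi⟩ := integral_bounds_of_forall_mul_le hxb hqy_int hq_int
    (m := y b) (M := y x)
    (fun t ht => by rw [mul_comm]; gcongr; exacts [hq t, hy_anti ht.2])
    (fun t ht => by rw [mul_comm (y x)]; gcongr; exacts [hq t, hy_anti ht.1])
  have hY_eq : ∫ t in x..b, -y' t = y x - y b := by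
    rw [intervalIntegral.integral_neg, ← hy.sub_eq_integral]; ring
  have hW_eq : ∫ t in x..b, q t * y t = -(r x * y' x) - -(r b * y' b) := by
    rw [← hy.flux_sub_eq_integral]; ring
  rw [hY_eq] at hY_lo hY_hi
  rw [hW_eq] at hW_lo hW_hi
  rw [abs_of_nonpos (hy' x), mul_neg]
  exact half_le_mul_le_two_mul_of_increment_bounds (hy_nonneg b)
    (neg_nonneg.2 (mul_nonpos_of_nonneg_of_nonpos (hr b).le (hy' b)))
    (intervalIntegral.integral_nonneg hxb fun t _ => hr_inv t) hψQ
    hY_lo hY_hi hW_lo hW_hi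

end IsSolutionHom

theorem stmt_10_general (r q u u' v v' d1 d2 : ℝ → ℝ) (h12 : Cond12 r q)
    (hFSS : IsFSS r q u u' v v') (hd1 : IsD1 r q d1) (hd2 : IsD2 r q d2) :
    ∀ x : ℝ,
      (2⁻¹ * v x ≤ r x * v' x * phiF r d1 x ∧ r x * v' x * phiF r d1 x ≤ 2 * v x) ∧
      (2⁻¹ * u x ≤ r x * |u' x| * psiF r d2 x ∧ r x * |u' x| * psiF r d2 x ≤ 2 * u x) := by
  obtain ⟨hr, hq, -, -⟩ := h12
  obtain ⟨hu, hv, hu_pos, hv_pos, hv', hu', -⟩ := hFSS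
  intro x
  obtain ⟨hd1_pos, hF1⟩ := hd1 x
  obtain ⟨hd2_pos, hF2⟩ := hd2 x
  exact ⟨hv.half_le_flux_mul_integral_inv_le_of_nonneg hr hq (fun t => (hv_pos t).le) hv'
      (by linarith) hF1,
    hu.half_le_flux_mul_integral_inv_le_of_nonpos hr hq (fun t => (hu_pos t).le) hu'
      (by linarith) hF2⟩

/-- Lemma 2.3: under (1.2) and (1.6), for all `x ∈ ℝ`:
`2⁻¹ v(x) ≤ r(x)v'(x)φ(x) ≤ 2v(x)` and `2⁻¹ u(x) ≤ r(x)|u'(x)|ψ(x) ≤ 2u(x)`. -/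
theorem stmt_10 (r q u u' v v' d1 d2 : ℝ → ℝ) (h12 : Cond12 r q) (h16 : Cond16 r q)
    (hFSS : IsFSS r q u u' v v') (hd1 : IsD1 r q d1) (hd2 : IsD2 r q d2) :
    ∀ x : ℝ,
      (2⁻¹ * v x ≤ r x * v' x * phiF r d1 x ∧ r x * v' x * phiF r d1 x ≤ 2 * v x) ∧
      (2⁻¹ * u x ≤ r x * |u' x| * psiF r d2 x ∧ r x * |u' x| * psiF r d2 x ≤ 2 * u x) :=
  stmt_10_general r q u u' v v' d1 d2 h12 hFSS hd1 hd2

end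
end

section
/- Let r ≡ 1 and suppose q satisfies conditions (1.2) and (1.5). Then for every x ∈ ℝ, the equation d·∫_{x-d}^{x+d} q(t)dt = 2 in d ≥ 0 has a unique finite positive solution, denoted d̃(x), and the following two-sided estimates hold for all x ∈ ℝ: 4⁻¹d̃(x) ≤ ρ(x) ≤ (3/2)d̃(x), where ρ(x) = u(x)v(x). -/
open MeasureTheory Set Filter
open scoped ENNReal

noncomputable section

/-!
The map `d ↦ d ∫_{x-d}^{x+d} q` is continuous, vanishes at `0`, is strictly increasing once the
integral is positive, and (1.5) makes the integral positive for large `d`; so `d̃(x)` exists and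
is unique.

For the estimates let `δ = d̃(x)`, `M₁ = ∫_{x-δ}^x q`, `M₂ = ∫_x^{x+δ} q`, so `δ (M₁ + M₂) = 2`.
As `u` decreases and `u'` increases, integrating `u'' = q u` over `[x, x+δ]` gives
`-δ u'(x) < u(x) (1 + δ M₂)` (because `u(x+δ) > 0`) and `M₂ u(x) ≤ -u'(x) (1 + δ M₂)`
(because `u'(x+δ) ≤ 0`); the reflection `t ↦ -t` turns `v` into such a solution and gives the
mirror bounds on `[x-δ, x]`. Weighting by `v(x)`, `u(x)` and using `v'u - u'v = 1` yields
`δ < 4 u v` and `2 (1 + P) u v ≤ (3 + P) δ` with `P = δ² M₁ M₂ ≥ 0`.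
-/

open intervalIntegral

theorem MeasureTheory.LocallyIntegrable.intervalIntegrable_s12 {f : ℝ → ℝ}
    (hf : LocallyIntegrable f volume) (a b : ℝ) : IntervalIntegrable f volume a b :=
  intervalIntegrable_iff.2 ((hf.integrableOn_isCompact isCompact_uIcc).mono_set uIoc_subset_uIcc)

theorem intervalIntegrable_comp_neg {f : ℝ → ℝ}
    (hf : ∀ a b, IntervalIntegrable f volume a b) (a b : ℝ) :
    IntervalIntegrable (fun t => f (-t)) volume a b := by
  simpa using (IntervalIntegrable.iff_comp_neg (f := f)).1 (hf (-a) (-b))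

theorem existsUnique_pos_mul_eq {I : ℝ → ℝ} (hI : Continuous I) (hmono : MonotoneOn I (Ici 0))
    {D : ℝ} (hD : 0 ≤ D) (hID : 0 < I D) {c : ℝ} (hc : 0 < c) :
    ∃! d : ℝ, 0 < d ∧ d * I d = c := by
  set D' := max D (c / I D)
  have hD' : 0 ≤ D' := hD.trans (le_max_left _ _)
  have hcD' : c ≤ D' * I D' :=
    calc c = c / I D * I D := (div_mul_cancel₀ c hID.ne').symm
      _ ≤ D' * I D := by gcongr; exact le_max_right _ _
      _ ≤ D' * I D' := by gcongr; exact hmono hD hD' (le_max_left _ _)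
  obtain ⟨d, hd, hdc⟩ := intermediate_value_Icc hD' (continuous_id.mul hI).continuousOn
    (show c ∈ Icc (0 * I 0) (D' * I D') from ⟨by simpa using hc.le, hcD'⟩)
  have hdc : d * I d = c := hdc
  have hd₀ : 0 < d := hd.1.lt_of_ne (by rintro rfl; rw [zero_mul] at hdc; exact hc.ne hdc)
  have gt_beyond_root : ∀ {d₁ d₂}, 0 < d₁ → d₁ < d₂ → d₁ * I d₁ = c → c < d₂ * I d₂ := by
    intro d₁ d₂ hd₁ h₁₂ hc₁
    have hI₁ : 0 < I d₁ := pos_of_mul_pos_right (hc₁ ▸ hc) hd₁.le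
    have hd₂ : 0 < d₂ := hd₁.trans h₁₂
    calc c = d₁ * I d₁ := hc₁.symm
      _ < d₂ * I d₁ := by gcongr
      _ ≤ d₂ * I d₂ := by gcongr; exact hmono hd₁.le hd₂.le h₁₂.le
  refine ⟨d, ⟨hd₀, hdc⟩, fun e ⟨he₀, hec⟩ => ?_⟩
  rcases lt_trichotomy e d with h | h | h
  · exact absurd hdc (gt_beyond_root he₀ h hec).ne'
  · exact h
  · exact absurd hec (gt_beyond_root hd₀ h hdc).ne'

section SymmetricIntegral

variable {q : ℝ → ℝ}

theorem continuous_integral_sub_add (hq : LocallyIntegrable q volume) (x : ℝ) :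
    Continuous fun d => ∫ t in (x - d)..(x + d), q t := by
  have hG := continuous_primitive hq.intervalIntegrable_s12 0
  have hsub : (fun d => ∫ t in (x - d)..(x + d), q t) =
      fun d => (∫ t in 0..(x + d), q t) - ∫ t in 0..(x - d), q t :=
    funext fun d => (integral_interval_sub_left (hq.intervalIntegrable_s12 _ _)
      (hq.intervalIntegrable_s12 _ _)).symm
  rw [hsub]
  exact (hG.comp (continuous_const.add continuous_id)).sub
    (hG.comp (continuous_const.sub continuous_id))

theorem monotoneOn_integral_sub_add (hq₀ : ∀ t, 0 ≤ q t) (hq : LocallyIntegrable q volume)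
    (x : ℝ) : MonotoneOn (fun d => ∫ t in (x - d)..(x + d), q t) (Ici 0) := by
  intro d₁ hd₁ d₂ _ h₁₂
  exact integral_mono_interval (by linarith) (by linarith [mem_Ici.1 hd₁]) (by linarith)
    (ae_of_all _ hq₀) (hq.intervalIntegrable_s12 _ _)

theorem exists_pos_integral_sub_add (hq₀ : ∀ t, 0 ≤ q t) (hq : LocallyIntegrable q volume)
    {s : Set ℝ} (hs : 0 < ∫⁻ t in s, ENNReal.ofReal (q t)) (x : ℝ) :
    ∃ n : ℕ, 0 < ∫ t in (x - n)..(x + n), q t := by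
  by_contra! h
  have hzero : ∀ n : ℕ, q =ᵐ[volume.restrict (Ioc (x - n) (x + n))] 0 := by
    intro n
    have hle : x - n ≤ x + n := by linarith [n.cast_nonneg (α := ℝ)]
    rw [← integral_eq_zero_iff_of_nonneg (fun t => hq₀ t) (hq.integrableOn_isCompact
      isCompact_Icc |>.mono_set Ioc_subset_Icc_self)]
    have hn := h n
    rw [integral_of_le hle] at hn
    exact le_antisymm hn (setIntegral_nonneg measurableSet_Ioc fun t _ => hq₀ t)
  have hcover : (⋃ n : ℕ, Ioc (x - n) (x + n)) = univ := by
    refine eq_univ_of_forall fun t => mem_iUnion.2 ?_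
    obtain ⟨n, hn⟩ := exists_nat_gt |t - x|
    exact ⟨n, by constructor <;> linarith [le_abs_self (t - x), neg_abs_le (t - x)]⟩
  have hae : ∀ᵐ t, q t = 0 := by
    simpa [hcover] using (ae_restrict_iUnion_iff _ _).2 hzero
  have : ∫⁻ t in s, ENNReal.ofReal (q t) = 0 := by
    rw [lintegral_congr_ae (ae_restrict_of_ae (hae.mono fun t ht => by rw [ht]))]
    simp
  exact hs.ne' this

end SymmetricIntegral

namespace IsSolutionHom

variable {q z z' : ℝ → ℝ}

theorem sub_eq_integral_s12 (hz : IsSolutionHom (fun _ => 1) q z z') (a b : ℝ) :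
    z b - z a = ∫ t in a..b, z' t := by
  rw [hz.2.1 a, hz.2.1 b, ← integral_interval_sub_left (hz.1 0 b) (hz.1 0 a)]
  ring

theorem intervalIntegrable_mul (hz : IsSolutionHom (fun _ => 1) q z z') (a b : ℝ) :
    IntervalIntegrable (fun t => q t * z t) volume a b := by
  simpa using hz.2.2.1 a b

theorem deriv_sub_eq_integral (hz : IsSolutionHom (fun _ => 1) q z z') (a b : ℝ) :
    z' b - z' a = ∫ t in a..b, q t * z t := by
  have h := hz.2.2.2
  simp only [one_mul, sub_zero] at h
  rw [h a, h b, ← integral_interval_sub_left (hz.intervalIntegrable_mul 0 b)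
    (hz.intervalIntegrable_mul 0 a)]
  ring

theorem comp_neg (hz : IsSolutionHom (fun _ => 1) q z z') :
    IsSolutionHom (fun _ => 1) (fun t => q (-t)) (fun t => z (-t)) (fun t => -z' (-t)) := by
  refine ⟨fun a b => ?_, fun x => ?_, fun a b => ?_, fun x => ?_⟩
  · exact (intervalIntegrable_comp_neg hz.1 a b).neg
  · have h := hz.sub_eq_integral_s12 0 (-x)
    rw [intervalIntegral.integral_neg, integral_comp_neg]
    simp only [neg_zero] at h ⊢
    rw [integral_symm]
    linarith
  · simpa using intervalIntegrable_comp_neg hz.intervalIntegrable_mul a b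
  · have h := hz.deriv_sub_eq_integral (-x) 0
    simp only [one_mul, sub_zero, neg_zero]
    rw [integral_comp_neg (fun t => q t * z t)]
    simp only [neg_zero]
    linarith

theorem antitone_s12 (hz : IsSolutionHom (fun _ => 1) q z z') (hz' : ∀ t, z' t ≤ 0) :
    Antitone z :=
  fun a b hab => by
    have h := intervalIntegral.integral_nonneg (μ := volume) hab
      fun t _ => neg_nonneg.2 (hz' t)
    rw [intervalIntegral.integral_neg] at h
    linarith [hz.sub_eq_integral_s12 a b]

theorem monotone_deriv (hz : IsSolutionHom (fun _ => 1) q z z') (hq : ∀ t, 0 ≤ q t)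
    (hz₀ : ∀ t, 0 ≤ z t) : Monotone z' :=
  fun a b hab => by
    linarith [hz.deriv_sub_eq_integral a b,
      intervalIntegral.integral_nonneg (μ := volume) hab fun t _ => mul_nonneg (hq t) (hz₀ t)]

theorem mul_neg_deriv_lt_of_deriv_nonpos (hz : IsSolutionHom (fun _ => 1) q z z')
    (hq : ∀ t, 0 ≤ q t) (hqi : ∀ a b, IntervalIntegrable q volume a b) (hpos : ∀ t, 0 < z t)
    (hz' : ∀ t, z' t ≤ 0) (x : ℝ) {δ : ℝ} (hδ : 0 ≤ δ) :
    δ * -z' x < z x * (1 + δ * ∫ t in x..(x + δ), q t) := by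
  set M := ∫ t in x..(x + δ), q t
  have hderiv : ∀ t ∈ Icc x (x + δ), z' t ≤ z' x + z x * M := by
    intro t ht
    have hqz : ∫ s in x..t, q s * z s ≤ ∫ s in x..t, q s * z x :=
      integral_mono_on ht.1 (hz.intervalIntegrable_mul x t) ((hqi x t).mul_const _)
        fun s hs => mul_le_mul_of_nonneg_left (hz.antitone_s12 hz' hs.1) (hq s)
    have hqM : ∫ s in x..t, q s ≤ M :=
      integral_mono_interval le_rfl ht.1 ht.2 (ae_of_all _ hq) (hqi _ _)
    rw [intervalIntegral.integral_mul_const] at hqz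
    nlinarith [hz.deriv_sub_eq_integral x t, (hpos x).le]
  have hz_le : z (x + δ) - z x ≤ δ * (z' x + z x * M) := by
    have h := integral_mono_on (by linarith) (hz.1 _ _) intervalIntegrable_const hderiv
    simp only [intervalIntegral.integral_const, add_sub_cancel_left, smul_eq_mul] at h
    linarith [hz.sub_eq_integral_s12 x (x + δ)]
  nlinarith [hpos (x + δ)]

theorem integral_mul_le_of_deriv_nonpos (hz : IsSolutionHom (fun _ => 1) q z z')
    (hq : ∀ t, 0 ≤ q t) (hqi : ∀ a b, IntervalIntegrable q volume a b) (hpos : ∀ t, 0 < z t)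
    (hz' : ∀ t, z' t ≤ 0) (x : ℝ) {δ : ℝ} (hδ : 0 ≤ δ) :
    (∫ t in x..(x + δ), q t) * z x ≤ -z' x * (1 + δ * ∫ t in x..(x + δ), q t) := by
  set M := ∫ t in x..(x + δ), q t
  have hM : 0 ≤ M := intervalIntegral.integral_nonneg (by linarith) fun t _ => hq t
  have hderiv : M * z (x + δ) ≤ -z' x := by
    have hqz : ∫ t in x..(x + δ), q t * z (x + δ) ≤ ∫ t in x..(x + δ), q t * z t :=
      integral_mono_on (by linarith) ((hqi _ _).mul_const _) (hz.intervalIntegrable_mul _ _)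
        fun t ht => mul_le_mul_of_nonneg_left (hz.antitone_s12 hz' ht.2) (hq t)
    rw [intervalIntegral.integral_mul_const] at hqz
    linarith [hz.deriv_sub_eq_integral x (x + δ), hz' (x + δ)]
  have hz_le : z x ≤ z (x + δ) - δ * z' x := by
    have h := integral_mono_on (by linarith) intervalIntegrable_const (hz.1 x (x + δ))
      fun t ht => hz.monotone_deriv hq (fun t => (hpos t).le) ht.1
    simp only [intervalIntegral.integral_const, add_sub_cancel_left, smul_eq_mul] at h
    linarith [hz.sub_eq_integral_s12 x (x + δ)]
  nlinarith [mul_le_mul_of_nonneg_left hz_le hM]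

theorem mul_deriv_lt_of_deriv_nonneg (hz : IsSolutionHom (fun _ => 1) q z z')
    (hq : ∀ t, 0 ≤ q t) (hqi : ∀ a b, IntervalIntegrable q volume a b) (hpos : ∀ t, 0 < z t)
    (hz' : ∀ t, 0 ≤ z' t) (x : ℝ) {δ : ℝ} (hδ : 0 ≤ δ) :
    δ * z' x < z x * (1 + δ * ∫ t in (x - δ)..x, q t) := by
  simpa [integral_comp_neg, neg_add_eq_sub] using
    hz.comp_neg.mul_neg_deriv_lt_of_deriv_nonpos (fun t => hq (-t))
      (intervalIntegrable_comp_neg hqi) (fun t => hpos (-t)) (fun t => neg_nonpos.2 (hz' (-t)))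
      (-x) hδ

theorem integral_mul_le_of_deriv_nonneg (hz : IsSolutionHom (fun _ => 1) q z z')
    (hq : ∀ t, 0 ≤ q t) (hqi : ∀ a b, IntervalIntegrable q volume a b) (hpos : ∀ t, 0 < z t)
    (hz' : ∀ t, 0 ≤ z' t) (x : ℝ) {δ : ℝ} (hδ : 0 ≤ δ) :
    (∫ t in (x - δ)..x, q t) * z x ≤ z' x * (1 + δ * ∫ t in (x - δ)..x, q t) := by
  simpa [integral_comp_neg, neg_add_eq_sub] using
    hz.comp_neg.integral_mul_le_of_deriv_nonpos (fun t => hq (-t))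
      (intervalIntegrable_comp_neg hqi) (fun t => hpos (-t)) (fun t => neg_nonpos.2 (hz' (-t)))
      (-x) hδ

end IsSolutionHom

section WronskianAlgebra

variable {u v a b δ M₁ M₂ : ℝ}

theorem inv_four_mul_le_mul_of_wronskian (hW : b * u + a * v = 1) (hM : δ * (M₁ + M₂) = 2)
    (hu : 0 < u) (hv : 0 < v) (ha : δ * a < u * (1 + δ * M₂)) (hb : δ * b < v * (1 + δ * M₁)) :
    4⁻¹ * δ ≤ u * v := by
  have hδ : δ = δ * (b * u + a * v) := by rw [hW, mul_one]
  linear_combination hδ / 4 + u * v * hM / 4 + (mul_lt_mul_of_pos_left ha hv) / 4 +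
    (mul_lt_mul_of_pos_left hb hu) / 4

theorem mul_le_three_halves_mul_of_wronskian (hW : b * u + a * v = 1) (hM : δ * (M₁ + M₂) = 2)
    (hδ : 0 ≤ δ) (hM₁ : 0 ≤ M₁) (hM₂ : 0 ≤ M₂) (hu : 0 ≤ u) (hv : 0 ≤ v)
    (ha : M₂ * u ≤ a * (1 + δ * M₂)) (hb : M₁ * v ≤ b * (1 + δ * M₁)) :
    u * v ≤ 3 / 2 * δ := by
  have key : u * v * (M₁ + M₂ + 2 * δ * M₁ * M₂) ≤ (1 + δ * M₁) * (1 + δ * M₂) := by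
    have hW' := congrArg (· * ((1 + δ * M₁) * (1 + δ * M₂))) hW
    simp only [one_mul] at hW'
    nlinarith [mul_le_mul_of_nonneg_right hb (by positivity : 0 ≤ u * (1 + δ * M₂)),
      mul_le_mul_of_nonneg_right ha (by positivity : 0 ≤ v * (1 + δ * M₁))]
  have hP : 0 ≤ δ * δ * M₁ * M₂ := by positivity
  nlinarith [mul_le_mul_of_nonneg_left key hδ, mul_nonneg hP (mul_nonneg hu hv)]

end WronskianAlgebra

/-- Lemma 2.6: for `r ≡ 1` and `q` satisfying (1.2) and (1.5), for every
`x` the equation `d·∫_{x-d}^{x+d} q = 2` has a unique positive solution `d̃(x)`, and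
`4⁻¹ d̃(x) ≤ ρ(x) ≤ (3/2) d̃(x)` where `ρ = u·v`. -/
theorem stmt_12 (q u u' v v' : ℝ → ℝ) (hq : ∀ x : ℝ, 0 ≤ q x)
    (hqi : LocallyIntegrable q volume) (h15 : Cond15 q)
    (hFSS : IsFSS (fun _ => 1) q u u' v v') :
    (∀ x : ℝ, ∃! d : ℝ, 0 < d ∧ d * ∫ t in (x - d)..(x + d), q t = 2) ∧
    ∀ dt : ℝ → ℝ, (∀ x : ℝ, 0 < dt x ∧ dt x * ∫ t in (x - dt x)..(x + dt x), q t = 2) →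
      ∀ x : ℝ, 4⁻¹ * dt x ≤ u x * v x ∧ u x * v x ≤ (3 / 2) * dt x := by
  obtain ⟨hu, hv, hupos, hvpos, hv', hu', hW, -⟩ := hFSS
  refine ⟨fun x => ?_, fun dt hdt x => ?_⟩
  · obtain ⟨n, hn⟩ := exists_pos_integral_sub_add hq hqi (h15 x).1 x
    exact existsUnique_pos_mul_eq (continuous_integral_sub_add hqi x)
      (monotoneOn_integral_sub_add hq hqi x) n.cast_nonneg hn two_pos
  · obtain ⟨hδ, hδ2⟩ := hdt x
    rw [← integral_add_adjacent_intervals (hqi.intervalIntegrable_s12 _ x)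
      (hqi.intervalIntegrable_s12 x _)] at hδ2
    have hWx : v' x * u x + -u' x * v x = 1 := by linarith [hW x]
    have hM₁ : 0 ≤ ∫ t in (x - dt x)..x, q t :=
      intervalIntegral.integral_nonneg (by linarith) fun t _ => hq t
    have hM₂ : 0 ≤ ∫ t in x..(x + dt x), q t :=
      intervalIntegral.integral_nonneg (by linarith) fun t _ => hq t
    have hqi' := hqi.intervalIntegrable_s12
    exact ⟨inv_four_mul_le_mul_of_wronskian hWx hδ2 (hupos x) (hvpos x)
        (hu.mul_neg_deriv_lt_of_deriv_nonpos hq hqi' hupos hu' x hδ.le)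
        (hv.mul_deriv_lt_of_deriv_nonneg hq hqi' hvpos hv' x hδ.le),
      mul_le_three_halves_mul_of_wronskian hWx hδ2 hδ.le hM₁ hM₂ (hupos x).le (hvpos x).le
        (hu.integral_mul_le_of_deriv_nonpos hq hqi' hupos hu' x hδ.le)
        (hv.integral_mul_le_of_deriv_nonneg hq hqi' hvpos hv' x hδ.le)⟩
end
end
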